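/- arXiv:2003.08078 — 9 statements merged into one kernel-verified Lean document; each statement's English description precedes it below -/
import Mathlib

section
/- Let f : ℝ^d → ℝ be continuously differentiable and strictly convex, let M be a positive semidefinite matrix inducing the seminorm ‖x‖_M = √(xᵀMx), and suppose ∇f(x) lies in the image of M for all x. For y ∈ ℝ^d and r > 0, let z be a minimizer of f over the ball {x : ‖x − y‖_M ≤ r}. Then either ∇f(z) = 0 (z is a global minimizer of f), or ‖z − y‖_M = r and ∇f(z) = −(‖∇f(z)‖_{M†}/r) · M(z − y), where M† is the pseudoinverse of M. -/
open Matrix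

/-- The four Moore–Penrose conditions characterizing the pseudoinverse. -/
def IsMoorePenrose {d : ℕ} (A B : Matrix (Fin d) (Fin d) ℝ) : Prop :=
  A * B * A = A ∧ B * A * B = B ∧ (A * B)ᵀ = A * B ∧ (B * A)ᵀ = B * A

/-!
Write `M = Bᵀ B`, so that `‖x‖_M = ‖B x‖`, and `∇f(z) = M w`. If `z` lies in the interior of the
ball it is a local minimizer, so `∇f(z) = 0`. Otherwise `‖B (z - y)‖ = r`, and the first-order
condition on the convex ball, tested at `y - (r / ‖B w‖) w`, gives
`⟪B (z - y), B w⟫ ≤ -r ‖B w‖ = -‖B (z - y)‖ ‖B w‖`. This is the equality case of Cauchy–Schwarz,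
so `‖B w‖ B (z - y) = -r B w`; applying `Bᵀ`, and `‖B w‖² = wᵀ M w = ∇f(z)ᵀ M† ∇f(z)`, gives the
formula.
-/

open Topology RealInnerProductSpace

theorem norm_smul_eq_neg_smul_of_inner_le_neg {E : Type*} [NormedAddCommGroup E]
    [InnerProductSpace ℝ E] {a b : E} (h : ⟪a, b⟫ ≤ -(‖a‖ * ‖b‖)) :
    ‖b‖ • a = -(‖a‖ • b) := by
  have heq : ⟪a, -b⟫ = ‖a‖ * ‖-b‖ := by
    rw [inner_neg_right, norm_neg]
    linarith [neg_le_of_abs_le (abs_real_inner_le_norm a b)]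
  simpa [smul_neg] using inner_eq_norm_mul_iff_real.mp heq

theorem IsMinOn.hasFDerivAt_apply_sub_nonneg {V : Type*} [NormedAddCommGroup V] [NormedSpace ℝ V]
    {f : V → ℝ} {f' : V →L[ℝ] ℝ} {s : Set V} {x z : V} (hmin : IsMinOn f s z)
    (hf : HasFDerivAt f f' z) (hs : Convex ℝ s) (hz : z ∈ s) (hx : x ∈ s) : 0 ≤ f' (x - z) :=
  hmin.localize.hasFDerivWithinAt_nonneg hf.hasFDerivWithinAt
    (sub_mem_posTangentConeAt_of_segment_subset (hs.segment_subset hz hx))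

section SeminormBall
variable {V E : Type*} [NormedAddCommGroup V] [NormedSpace ℝ V]
  [NormedAddCommGroup E] [InnerProductSpace ℝ E]
  (L : V →L[ℝ] E) {f : V → ℝ} {f' : V →L[ℝ] ℝ} {y z w : V} {r : ℝ}

theorem convex_setOf_norm_map_sub_le : Convex ℝ {x | ‖L (x - y)‖ ≤ r} :=
  ((normSeminorm ℝ E).comp L.toLinearMap).convex_closedBall y r

variable {L}

theorem HasFDerivAt.eq_zero_of_isMinOn_of_norm_lt (hf : HasFDerivAt f f' z)
    (hmin : IsMinOn f {x | ‖L (x - y)‖ ≤ r} z) (hz : ‖L (z - y)‖ < r) : f' = 0 := by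
  have hcont : Continuous fun x => ‖L (x - y)‖ := by fun_prop
  have hnhds : {x | ‖L (x - y)‖ ≤ r} ∈ 𝓝 z :=
    Filter.mem_of_superset ((isOpen_lt hcont continuous_const).mem_nhds hz)
      (Set.ofPred_subset_ofPred.mpr fun _ => le_of_lt)
  exact (hmin.isLocalMin hnhds).hasFDerivAt_eq_zero hf

theorem HasFDerivAt.inner_le_of_isMinOn (hf : HasFDerivAt f f' z)
    (hf' : ∀ v, f' v = ⟪L v, L w⟫) (hmin : IsMinOn f {x | ‖L (x - y)‖ ≤ r} z)
    (hz : ‖L (z - y)‖ ≤ r) : ⟪L (z - y), L w⟫ ≤ -(r * ‖L w‖) := by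
  have hr : 0 ≤ r := (norm_nonneg _).trans hz
  -- the minimizer over the ball of the linearization `x ↦ ⟪L (x - y), L w⟫`
  set x := y - (r / ‖L w‖) • w
  have hx : ‖L (x - y)‖ ≤ r := by
    rcases (norm_nonneg (L w)).eq_or_lt with h | h
    · simp [x, ← h, hr]
    · simp [x, norm_smul, abs_of_nonneg hr, h.ne']
  have hvar := hmin.hasFDerivAt_apply_sub_nonneg hf (convex_setOf_norm_map_sub_le L) hz hx
  have hsplit : x - z = -(r / ‖L w‖) • w - (z - y) := by simp only [x]; module
  rw [hf', hsplit, map_sub, map_smul, inner_sub_left, real_inner_smul_left,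
    real_inner_self_eq_norm_sq] at hvar
  rcases (norm_nonneg (L w)).eq_or_lt with h | h
  · simp [← h] at hvar ⊢
    linarith
  · field_simp at hvar
    nlinarith

theorem HasFDerivAt.eq_zero_or_of_isMinOn (hf : HasFDerivAt f f' z)
    (hf' : ∀ v, f' v = ⟪L v, L w⟫) (hmin : IsMinOn f {x | ‖L (x - y)‖ ≤ r} z)
    (hz : ‖L (z - y)‖ ≤ r) :
    L w = 0 ∨ ‖L (z - y)‖ = r ∧ ‖L w‖ • L (z - y) = -(r • L w) := by
  rcases hz.lt_or_eq with hlt | heq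
  · left
    have h := hf' w
    rw [hf.eq_zero_of_isMinOn_of_norm_lt hmin hlt] at h
    exact inner_self_eq_zero.mp h.symm
  · right
    refine ⟨heq, ?_⟩
    have hCS := hf.inner_le_of_isMinOn hf' hmin hz
    rw [← heq] at hCS ⊢
    exact norm_smul_eq_neg_smul_of_inner_le_neg hCS

end SeminormBall

section Matrix

noncomputable def Matrix.toEuclideanMulVec {m n : Type*} [Fintype n] (B : Matrix m n ℝ) :
    (n → ℝ) →L[ℝ] EuclideanSpace ℝ m :=
  (EuclideanSpace.equiv m ℝ).symm.toContinuousLinearMap ∘L B.mulVecLin.toContinuousLinearMap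

@[simp]
theorem Matrix.toEuclideanMulVec_apply {m n : Type*} [Fintype n] (B : Matrix m n ℝ) (v : n → ℝ) :
    B.toEuclideanMulVec v = WithLp.toLp 2 (B *ᵥ v) := rfl

variable {m n : Type*} [Fintype m] [Fintype n]

theorem Matrix.inner_toEuclideanMulVec (B : Matrix m n ℝ) (u v : n → ℝ) :
    ⟪B.toEuclideanMulVec u, B.toEuclideanMulVec v⟫ = u ⬝ᵥ (Bᵀ * B) *ᵥ v := by
  rw [toEuclideanMulVec_apply, toEuclideanMulVec_apply, EuclideanSpace.inner_eq_star_dotProduct]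
  simp [← mulVec_mulVec, dotProduct_mulVec, vecMul_transpose, dotProduct_comm]

theorem Matrix.sqrt_dotProduct_transpose_mul_self_mulVec (B : Matrix m n ℝ) (v : n → ℝ) :
    √(v ⬝ᵥ (Bᵀ * B) *ᵥ v) = ‖B.toEuclideanMulVec v‖ := by
  rw [← inner_toEuclideanMulVec, real_inner_self_eq_norm_sq, Real.sqrt_sq (norm_nonneg _)]

theorem Matrix.transpose_mul_self_mulVec (B : Matrix m n ℝ) (v : n → ℝ) :
    (Bᵀ * B) *ᵥ v = Bᵀ *ᵥ WithLp.ofLp (B.toEuclideanMulVec v) := by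
  simp

theorem Matrix.PosSemidef.exists_eq_transpose_mul_self {M : Matrix n n ℝ} (hM : M.PosSemidef) :
    ∃ B : Matrix n n ℝ, M = Bᵀ * B := by
  classical
  open scoped MatrixOrder in
  exact CStarAlgebra.nonneg_iff_eq_star_mul_self.mp hM.nonneg

end Matrix

theorem IsMoorePenrose.dotProduct_mulVec_mulVec {d : ℕ} {M Mdag : Matrix (Fin d) (Fin d) ℝ}
    (h : IsMoorePenrose M Mdag) (hM : Mᵀ = M) (w : Fin d → ℝ) :
    M *ᵥ w ⬝ᵥ Mdag *ᵥ (M *ᵥ w) = w ⬝ᵥ M *ᵥ w := by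
  calc M *ᵥ w ⬝ᵥ Mdag *ᵥ (M *ᵥ w) = w ⬝ᵥ M *ᵥ (Mdag *ᵥ (M *ᵥ w)) := by
        rw [dotProduct_mulVec w M, ← mulVec_transpose, hM]
    _ = w ⬝ᵥ M *ᵥ w := by rw [mulVec_mulVec, mulVec_mulVec, h.1]

theorem stmt0_general {d : ℕ} (M Mdag : Matrix (Fin d) (Fin d) ℝ)
    (hM : M.PosSemidef) (hMdag : IsMoorePenrose M Mdag)
    (f : (Fin d → ℝ) → ℝ) (g : (Fin d → ℝ) → (Fin d → ℝ))
    (hdiff : Differentiable ℝ f)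
    (hgrad : ∀ x v, fderiv ℝ f x v = g x ⬝ᵥ v)
    (him : ∀ x, g x ∈ Set.range M.mulVec)
    (y : Fin d → ℝ) (r : ℝ) (hr : 0 < r)
    (z : Fin d → ℝ)
    (hzball : Real.sqrt ((z - y) ⬝ᵥ M.mulVec (z - y)) ≤ r)
    (hzmin : ∀ x, Real.sqrt ((x - y) ⬝ᵥ M.mulVec (x - y)) ≤ r → f z ≤ f x) :
    g z = 0 ∨
      (Real.sqrt ((z - y) ⬝ᵥ M.mulVec (z - y)) = r ∧
        g z = (-(Real.sqrt (g z ⬝ᵥ Mdag.mulVec (g z)) / r)) • M.mulVec (z - y)) := by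
  obtain ⟨B, rfl⟩ := hM.exists_eq_transpose_mul_self
  obtain ⟨w, hw⟩ := him z
  simp only [B.sqrt_dotProduct_transpose_mul_self_mulVec] at hzball hzmin ⊢
  have hgradL : ∀ v, fderiv ℝ f z v = ⟪B.toEuclideanMulVec v, B.toEuclideanMulVec w⟫ := by
    intro v
    rw [hgrad, ← hw, B.inner_toEuclideanMulVec, dotProduct_comm]
  have hdag : √(g z ⬝ᵥ Mdag *ᵥ g z) = ‖B.toEuclideanMulVec w‖ := by
    rw [← hw, hMdag.dotProduct_mulVec_mulVec (by simp), B.sqrt_dotProduct_transpose_mul_self_mulVec]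
  rcases (hdiff z).hasFDerivAt.eq_zero_or_of_isMinOn hgradL hzmin hzball with hw0 | ⟨hbd, hsmul⟩
  · left
    rw [← hw, B.transpose_mul_self_mulVec, hw0]
    simp
  · right
    refine ⟨hbd, ?_⟩
    have hscaled := congrArg (fun u => Bᵀ *ᵥ WithLp.ofLp u) hsmul
    simp only [WithLp.ofLp_smul, WithLp.ofLp_neg, mulVec_smul, mulVec_neg] at hscaled
    rw [← B.transpose_mul_self_mulVec, ← B.transpose_mul_self_mulVec, hw] at hscaled
    rw [hdag, neg_smul, div_eq_inv_mul, mul_smul, hscaled, smul_neg, neg_neg, smul_smul,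
      inv_mul_cancel₀ hr.ne', one_smul]

/-- Optimality characterization of a ball-constrained minimizer of a strictly convex,
continuously differentiable function. -/
theorem stmt0 {d : ℕ} (M Mdag : Matrix (Fin d) (Fin d) ℝ)
    (hM : M.PosSemidef) (hMdag : IsMoorePenrose M Mdag)
    (f : (Fin d → ℝ) → ℝ) (g : (Fin d → ℝ) → (Fin d → ℝ))
    (hdiff : Differentiable ℝ f)
    (hgrad : ∀ x v, fderiv ℝ f x v = g x ⬝ᵥ v)
    (hgcont : Continuous g)
    (hconv : StrictConvexOn ℝ Set.univ f)
    (him : ∀ x, g x ∈ Set.range M.mulVec)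
    (y : Fin d → ℝ) (r : ℝ) (hr : 0 < r)
    (z : Fin d → ℝ)
    (hzball : Real.sqrt ((z - y) ⬝ᵥ M.mulVec (z - y)) ≤ r)
    (hzmin : ∀ x, Real.sqrt ((x - y) ⬝ᵥ M.mulVec (x - y)) ≤ r → f z ≤ f x) :
    g z = 0 ∨
      (Real.sqrt ((z - y) ⬝ᵥ M.mulVec (z - y)) = r ∧
        g z = (-(Real.sqrt (g z ⬝ᵥ Mdag.mulVec (g z)) / r)) • M.mulVec (z - y)) :=
  stmt0_general M Mdag hM hMdag f g hdiff hgrad him y r hr z hzball hzmin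
end

section
/- If a thrice-differentiable function f : ℝ^d → ℝ is M-quasi-self-concordant with respect to a norm ‖·‖ (i.e., |∇³f(x)[u,u,h]| ≤ M ‖h‖ · uᵀ∇²f(x)u for all u, h, x), then f is (r, exp(Mr))-Hessian stable with respect to ‖·‖: for all x, y with ‖x − y‖ ≤ r, exp(−Mr)·∇²f(y) ⪯ ∇²f(x) ⪯ exp(Mr)·∇²f(y). -/
/-!
Fix `u` and restrict the Hessian form to the segment: `g t = ∇²f(y + t (x - y))[u, u]`.
By the symmetry of third derivatives, `g' t = ∇³f(y + t (x - y))[u, u, x - y]`, so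
quasi-self-concordance gives `|g'| ≤ M ‖x - y‖ g ≤ M r g`; the last step uses
`M ∇²f[u, u] ≥ 0`, which is quasi-self-concordance in the direction `h = u`.
Then `t ↦ exp (± M r t) g t` are monotone in opposite directions, which is Grönwall's
inequality in both time directions.
-/

open Set Real

section Gronwall

variable {g g' : ℝ → ℝ} {K a b : ℝ}

lemma monotoneOn_exp_mul_of_neg_mul_le_deriv (hg : ∀ t ∈ Icc a b, HasDerivAt g (g' t) t)
    (hbound : ∀ t ∈ Icc a b, -(K * g t) ≤ g' t) :
    MonotoneOn (fun t => exp (K * t) * g t) (Icc a b) := by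
  have hderiv : ∀ t ∈ Icc a b,
      HasDerivAt (fun t => exp (K * t) * g t) (exp (K * t) * (K * g t + g' t)) t := by
    intro t ht
    exact ((((hasDerivAt_id' t).const_mul K).exp).mul (hg t ht)).congr_deriv (by ring)
  refine monotoneOn_of_hasDerivWithinAt_nonneg (convex_Icc a b)
    (fun t ht => (hderiv t ht).continuousAt.continuousWithinAt)
    (fun t ht => (hderiv t (interior_subset ht)).hasDerivWithinAt) fun t ht => ?_
  have hnonneg : 0 ≤ K * g t + g' t := by linarith [hbound t (interior_subset ht)]
  positivity

lemma exp_neg_mul_le_and_le_exp_mul_of_abs_deriv_le (hab : a ≤ b)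
    (hg : ∀ t ∈ Icc a b, HasDerivAt g (g' t) t) (hbound : ∀ t ∈ Icc a b, |g' t| ≤ K * g t) :
    exp (-(K * (b - a))) * g a ≤ g b ∧ g b ≤ exp (K * (b - a)) * g a := by
  have ha : a ∈ Icc a b := left_mem_Icc.2 hab
  have hb : b ∈ Icc a b := right_mem_Icc.2 hab
  have hlow := monotoneOn_exp_mul_of_neg_mul_le_deriv (K := K) hg
    (fun t ht => by linarith [neg_abs_le (g' t), hbound t ht]) ha hb hab
  have hup := monotoneOn_exp_mul_of_neg_mul_le_deriv (K := -K) (fun t ht => (hg t ht).neg)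
    (fun t ht => by simp only [Pi.neg_apply]; linarith [le_abs_self (g' t), hbound t ht])
    ha hb hab
  simp only [Pi.neg_apply, mul_neg, neg_le_neg_iff] at hlow hup
  constructor
  · calc exp (-(K * (b - a))) * g a = exp (-(K * b)) * (exp (K * a) * g a) := by
          rw [← mul_assoc, ← exp_add]; ring_nf
      _ ≤ exp (-(K * b)) * (exp (K * b) * g b) := by gcongr
      _ = g b := by rw [← mul_assoc, ← exp_add]; simp
  · calc g b = exp (K * b) * (exp (-K * b) * g b) := by
          rw [← mul_assoc, ← exp_add]; ring_nf; simp
      _ ≤ exp (K * b) * (exp (-K * a) * g a) := by gcongr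
      _ = exp (K * (b - a)) * g a := by
          rw [← mul_assoc, ← exp_add]; ring_nf

end Gronwall

section IteratedFDeriv

variable {𝕜 : Type*} [NontriviallyNormedField 𝕜] {E F : Type*} [NormedAddCommGroup E]
  [NormedSpace 𝕜 E] [NormedAddCommGroup F] [NormedSpace 𝕜 F] {n : ℕ} {f : E → F}

lemma hasFDerivAt_iteratedFDeriv_apply (hf : ContDiff 𝕜 (n + 1) f) (m : Fin n → E) (z : E) :
    HasFDerivAt (fun w => iteratedFDeriv 𝕜 n f w m)
      ((ContinuousMultilinearMap.apply 𝕜 (fun _ => E) F m).comp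
        (fderiv 𝕜 (iteratedFDeriv 𝕜 n f) z)) z :=
  (ContinuousMultilinearMap.apply 𝕜 (fun _ => E) F m).hasFDerivAt.comp z
    ((hf.differentiable_iteratedFDeriv (by norm_cast; omega)) z).hasFDerivAt

lemma hasDerivAt_iteratedFDeriv_apply_add_smul (hf : ContDiff 𝕜 (n + 1) f) (m : Fin n → E)
    (y v : E) (t : 𝕜) :
    HasDerivAt (fun t => iteratedFDeriv 𝕜 n f (y + t • v) m)
      (iteratedFDeriv 𝕜 (n + 1) f (y + t • v) (Fin.cons v m)) t := by
  have hline : HasDerivAt (fun t : 𝕜 => y + t • v) v t := by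
    simpa using ((hasDerivAt_id t).smul_const v).const_add y
  exact (hasFDerivAt_iteratedFDeriv_apply hf m _).comp_hasDerivAt t hline

end IteratedFDeriv

section Symmetry

variable {E F : Type*} [NormedAddCommGroup E] [NormedSpace ℝ E] [NormedAddCommGroup F]
  [NormedSpace ℝ F] {f : E → F}

lemma iteratedFDeriv_three_swap_left (hf : ContDiff ℝ 3 f) (z a b c : E) :
    iteratedFDeriv ℝ 3 f z ![a, b, c] = iteratedFDeriv ℝ 3 f z ![b, a, c] := by
  have hsymm := ((hf.fderiv_right (m := 2) (by norm_num)).contDiffAt (x := z)).isSymmSndFDerivAt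
    (by simp)
  have hinit : ∀ x y : E, Fin.init ![x, y, c] = ![x, y] := fun x y => by
    ext i; fin_cases i <;> rfl
  rw [iteratedFDeriv_succ_apply_right (m := ![a, b, c]),
    iteratedFDeriv_succ_apply_right (m := ![b, a, c]), hinit, hinit]
  exact congrArg (· c) hsymm.iteratedFDeriv_cons

lemma iteratedFDeriv_three_swap_right (hf : ContDiff ℝ 3 f) (z a b c : E) :
    iteratedFDeriv ℝ 3 f z ![a, b, c] = iteratedFDeriv ℝ 3 f z ![a, c, b] := by
  have hsymm :
      (fun w => iteratedFDeriv ℝ 2 f w ![b, c]) = fun w => iteratedFDeriv ℝ 2 f w ![c, b] :=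
    funext fun w => (hf.contDiffAt.isSymmSndFDerivAt (by simp; norm_cast)).iteratedFDeriv_cons
  have hbc := hasFDerivAt_iteratedFDeriv_apply hf ![b, c] z
  rw [hsymm] at hbc
  exact congrArg (· a) (hbc.unique (hasFDerivAt_iteratedFDeriv_apply hf ![c, b] z))

end Symmetry

section QuasiSelfConcordant

variable {E : Type*} [NormedAddCommGroup E] [NormedSpace ℝ E] {f : E → ℝ} {M r : ℝ}

def QuasiSelfConcordant (f : E → ℝ) (M : ℝ) : Prop :=
  ∀ x u h : E, |iteratedFDeriv ℝ 3 f x ![u, u, h]| ≤ M * ‖h‖ * iteratedFDeriv ℝ 2 f x ![u, u]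

lemma QuasiSelfConcordant.mul_iteratedFDeriv_two_nonneg (hqsc : QuasiSelfConcordant f M)
    (x u : E) : 0 ≤ M * iteratedFDeriv ℝ 2 f x ![u, u] := by
  rcases eq_or_ne u 0 with rfl | hu
  · simp [(iteratedFDeriv ℝ 2 f x).map_coord_zero (m := ![0, 0]) 0 rfl]
  · have := (abs_nonneg _).trans (hqsc x u u)
    rw [mul_comm M, mul_assoc] at this
    exact nonneg_of_mul_nonneg_right this (norm_pos_iff.2 hu)

lemma QuasiSelfConcordant.abs_iteratedFDeriv_three_le (hqsc : QuasiSelfConcordant f M)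
    {v : E} (hv : ‖v‖ ≤ r) (x u : E) :
    |iteratedFDeriv ℝ 3 f x ![u, u, v]| ≤ M * r * iteratedFDeriv ℝ 2 f x ![u, u] :=
  calc |iteratedFDeriv ℝ 3 f x ![u, u, v]| ≤ ‖v‖ * (M * iteratedFDeriv ℝ 2 f x ![u, u]) := by
        linarith [hqsc x u v]
    _ ≤ r * (M * iteratedFDeriv ℝ 2 f x ![u, u]) :=
        mul_le_mul_of_nonneg_right hv (hqsc.mul_iteratedFDeriv_two_nonneg x u)
    _ = M * r * iteratedFDeriv ℝ 2 f x ![u, u] := by ring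

end QuasiSelfConcordant

theorem stmt3_general {E : Type*} [NormedAddCommGroup E] [NormedSpace ℝ E]
    (f : E → ℝ) (hf : ContDiff ℝ 3 f) (M r : ℝ)
    (hqsc : ∀ x u h : E,
      |iteratedFDeriv ℝ 3 f x ![u, u, h]| ≤ M * ‖h‖ * iteratedFDeriv ℝ 2 f x ![u, u]) :
    ∀ x y : E, ‖x - y‖ ≤ r → ∀ u : E,
      Real.exp (-(M * r)) * iteratedFDeriv ℝ 2 f y ![u, u] ≤ iteratedFDeriv ℝ 2 f x ![u, u] ∧
      iteratedFDeriv ℝ 2 f x ![u, u] ≤ Real.exp (M * r) * iteratedFDeriv ℝ 2 f y ![u, u] := by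
  intro x y hxy u
  have hderiv : ∀ t : ℝ, HasDerivAt (fun t => iteratedFDeriv ℝ 2 f (y + t • (x - y)) ![u, u])
      (iteratedFDeriv ℝ 3 f (y + t • (x - y)) ![u, u, x - y]) t := fun t => by
    rw [← iteratedFDeriv_three_swap_right hf, iteratedFDeriv_three_swap_left hf]
    exact hasDerivAt_iteratedFDeriv_apply_add_smul hf ![u, u] y (x - y) t
  have hbound := exp_neg_mul_le_and_le_exp_mul_of_abs_deriv_le zero_le_one
    (fun t _ => hderiv t) fun t _ => QuasiSelfConcordant.abs_iteratedFDeriv_three_le hqsc hxy _ u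
  simpa using hbound

/-- Quasi-self-concordance implies Hessian stability: if
`|∇³f(x)[u,u,h]| ≤ M ‖h‖ uᵀ∇²f(x)u` everywhere, then for `‖x - y‖ ≤ r` the Hessian
quadratic forms at `x` and `y` agree up to a factor `exp (M r)`. -/
theorem stmt3 {E : Type*} [NormedAddCommGroup E] [NormedSpace ℝ E]
    (f : E → ℝ) (hf : ContDiff ℝ 3 f) (M r : ℝ) (hM : 0 ≤ M) (hr : 0 ≤ r)
    (hqsc : ∀ x u h : E,
      |iteratedFDeriv ℝ 3 f x ![u, u, h]| ≤ M * ‖h‖ * iteratedFDeriv ℝ 2 f x ![u, u]) :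
    ∀ x y : E, ‖x - y‖ ≤ r → ∀ u : E,
      Real.exp (-(M * r)) * iteratedFDeriv ℝ 2 f y ![u, u] ≤ iteratedFDeriv ℝ 2 f x ![u, u] ∧
      iteratedFDeriv ℝ 2 f x ![u, u] ≤ Real.exp (M * r) * iteratedFDeriv ℝ 2 f y ![u, u] :=
  stmt3_general f hf M r hqsc
end

section
/- The log-sum-exp function lse(x) = log(Σ_{i∈[n]} exp(x_i)) is 1-smooth in the ℓ∞ norm: for all x, u ∈ ℝ^n, 0 ≤ uᵀ∇²lse(x)u ≤ ‖u‖∞². -/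
/-!
The quadratic form of the Hessian of `lse` at `x` is the variance of `u` under the softmax
distribution `pᵢ = exp xᵢ / ∑ⱼ exp xⱼ`, namely `∑ pᵢ uᵢ² - (∑ pᵢ uᵢ)²`. A variance is nonnegative
by Cauchy–Schwarz, and it is at most the second moment `∑ pᵢ uᵢ² ≤ maxᵢ uᵢ² = ‖u‖∞²`.
-/

open Real ContinuousLinearMap

variable {ι : Type*} [Fintype ι]

theorem sq_sum_mul_le_sum_mul_sum_mul_sq {w : ι → ℝ} (hw : ∀ i, 0 ≤ w i) (u : ι → ℝ) :
    (∑ i, w i * u i) ^ 2 ≤ (∑ i, w i) * ∑ i, w i * u i ^ 2 :=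
  Finset.sum_sq_le_sum_mul_sum_of_sq_le_mul _ (fun i _ => hw i)
    (fun i _ => mul_nonneg (hw i) (sq_nonneg _)) (fun i _ => le_of_eq (by ring))

theorem weighted_variance_nonneg {w : ι → ℝ} (hw : ∀ i, 0 ≤ w i) (u : ι → ℝ) :
    0 ≤ (∑ i, w i * u i ^ 2) / ∑ i, w i - ((∑ i, w i * u i) / ∑ i, w i) ^ 2 := by
  have hs : 0 ≤ ∑ i, w i := Finset.sum_nonneg fun i _ => hw i
  rcases hs.eq_or_lt with hs | hs
  · simp [← hs]
  rw [sub_nonneg, div_pow, sq (∑ i, w i), ← div_div, div_le_div_iff_of_pos_right hs,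
    div_le_iff₀ hs, mul_comm]
  exact sq_sum_mul_le_sum_mul_sum_mul_sq hw u

theorem weighted_variance_le_sq_norm {w : ι → ℝ} (hw : ∀ i, 0 ≤ w i) (u : ι → ℝ) :
    (∑ i, w i * u i ^ 2) / ∑ i, w i - ((∑ i, w i * u i) / ∑ i, w i) ^ 2 ≤ ‖u‖ ^ 2 := by
  have hu : ∀ i, u i ^ 2 ≤ ‖u‖ ^ 2 := fun i =>
    sq_le_sq.2 (by simpa [abs_norm] using norm_le_pi_norm u i)
  calc _ ≤ (∑ i, w i * u i ^ 2) / ∑ i, w i := sub_le_self _ (sq_nonneg _)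
    _ ≤ ‖u‖ ^ 2 := div_le_of_le_mul₀ (Finset.sum_nonneg fun i _ => hw i) (sq_nonneg _) <| by
      rw [Finset.mul_sum]
      exact Finset.sum_le_sum fun i _ => by nlinarith [hu i, hw i]

noncomputable def expDual (y : ι → ℝ) : (ι → ℝ) →L[ℝ] ℝ :=
  ∑ i, exp (y i) • proj i

noncomputable def expBilin (y : ι → ℝ) : (ι → ℝ) →L[ℝ] (ι → ℝ) →L[ℝ] ℝ :=
  ∑ i, (exp (y i) • proj i).smulRight (proj (R := ℝ) (φ := fun _ : ι => ℝ) i)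

@[simp]
theorem expDual_apply (y v : ι → ℝ) : expDual y v = ∑ i, exp (y i) * v i := by
  simp [expDual]

@[simp]
theorem expBilin_apply (y u v : ι → ℝ) : expBilin y u v = ∑ i, exp (y i) * u i * v i := by
  simp [expBilin, sum_apply]

theorem hasFDerivAt_sum_exp (y : ι → ℝ) :
    HasFDerivAt (fun z : ι → ℝ => ∑ i, exp (z i)) (expDual y) y :=
  HasFDerivAt.fun_sum fun i _ =>
    (hasDerivAt_exp (y i)).comp_hasFDerivAt (f := fun z : ι → ℝ => z i) y (hasFDerivAt_apply i y)

theorem hasFDerivAt_expDual (y : ι → ℝ) : HasFDerivAt expDual (expBilin y) y :=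
  HasFDerivAt.fun_sum fun i _ =>
    ((hasDerivAt_exp (y i)).comp_hasFDerivAt (f := fun z : ι → ℝ => z i) y
      (hasFDerivAt_apply i y)).smul_const (proj (R := ℝ) (φ := fun _ : ι => ℝ) i)

theorem sum_exp_pos [Nonempty ι] (y : ι → ℝ) : 0 < ∑ i, exp (y i) :=
  Finset.sum_pos (fun i _ => exp_pos (y i)) Finset.univ_nonempty

theorem hasFDerivAt_log_sum_exp [Nonempty ι] (y : ι → ℝ) :
    HasFDerivAt (fun z : ι → ℝ => log (∑ i, exp (z i))) ((∑ i, exp (y i))⁻¹ • expDual y) y :=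
  (hasFDerivAt_sum_exp y).log (sum_exp_pos y).ne'

theorem fderiv_fderiv_log_sum_exp_apply [Nonempty ι] (x u v : ι → ℝ) :
    fderiv ℝ (fderiv ℝ fun z : ι → ℝ => log (∑ i, exp (z i))) x u v =
      (∑ i, exp (x i) * u i * v i) / ∑ i, exp (x i) -
        (∑ i, exp (x i) * u i) / (∑ i, exp (x i)) * ((∑ i, exp (x i) * v i) / ∑ i, exp (x i)) := by
  have hS : ∑ i, exp (x i) ≠ 0 := (sum_exp_pos x).ne'
  have hinv : HasFDerivAt (fun z : ι → ℝ => (∑ i, exp (z i))⁻¹)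
      (-((∑ i, exp (x i)) ^ 2)⁻¹ • expDual x) x :=
    (hasDerivAt_inv hS).comp_hasFDerivAt x (hasFDerivAt_sum_exp x)
  have hgrad : fderiv ℝ (fun z : ι → ℝ => log (∑ i, exp (z i))) =
      fun y => (∑ i, exp (y i))⁻¹ • expDual y :=
    funext fun y => (hasFDerivAt_log_sum_exp y).fderiv
  rw [hgrad, (hinv.fun_smul (hasFDerivAt_expDual x)).fderiv]
  simp only [add_apply, smul_apply, smulRight_apply, expDual_apply, smul_eq_mul, neg_mul, neg_smul,
    expBilin_apply, neg_apply]
  field_simp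
  ring

theorem iteratedFDeriv_two_log_sum_exp (x u : ι → ℝ) :
    iteratedFDeriv ℝ 2 (fun z : ι → ℝ => log (∑ i, exp (z i))) x ![u, u] =
      (∑ i, exp (x i) * u i ^ 2) / ∑ i, exp (x i) -
        ((∑ i, exp (x i) * u i) / ∑ i, exp (x i)) ^ 2 := by
  cases isEmpty_or_nonempty ι
  -- for empty `ι` the function is the constant `log 0` and the right side is `0 / 0 - 0 ^ 2`
  · simp [iteratedFDeriv_const_of_ne two_ne_zero]
  rw [iteratedFDeriv_two_apply]
  simp [fderiv_fderiv_log_sum_exp_apply, sq, mul_assoc]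

/-- `lse` is 1-smooth in the `ℓ∞` norm: `0 ≤ uᵀ∇²lse(x)u ≤ ‖u‖∞²`.
(The norm on `Fin n → ℝ` is the sup norm.) -/
theorem stmt6 {n : ℕ} (x u : Fin n → ℝ) :
    0 ≤ iteratedFDeriv ℝ 2 (fun y : Fin n → ℝ => Real.log (∑ i, Real.exp (y i))) x ![u, u] ∧
    iteratedFDeriv ℝ 2 (fun y : Fin n → ℝ => Real.log (∑ i, Real.exp (y i))) x ![u, u]
      ≤ ‖u‖ ^ 2 := by
  have hw : ∀ i, 0 ≤ exp (x i) := fun i => (exp_pos (x i)).le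
  rw [iteratedFDeriv_two_log_sum_exp]
  exact ⟨weighted_variance_nonneg hw u, weighted_variance_le_sq_norm hw u⟩
end

section
/- Let H and M be symmetric positive semidefinite matrices sharing the same kernel with μM ⪯ H for some μ > 0. Then for any vector g, the function λ ↦ ‖(H + λM)† g‖_M is monotonically nonincreasing on λ ≥ 0, where † denotes the Moore–Penrose pseudoinverse. -/
/-! For `l ≥ 0` every `A_l = H + l M` has kernel `ker M`, so the orthogonal projection `A_l A_l†`
onto its range does not depend on `l`. For `x_l = A_l† g` and `l₁ ≤ l₂` this gives
`A_{l₁} (x₁ - x₂) = (l₂ - l₁) M x₂`, which makes the cross term `(x₁ - x₂)ᵀ M x₂` nonnegative, and then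
`‖x₁‖²_M = ‖x₁ - x₂‖²_M + 2 (x₁ - x₂)ᵀ M x₂ + ‖x₂‖²_M ≥ ‖x₂‖²_M`. -/

open Matrix

namespace Matrix

variable {n : Type*} [Fintype n] {A H M : Matrix n n ℝ}

theorem IsSymm.dotProduct_mulVec_comm (hM : M.IsSymm) (x y : n → ℝ) :
    x ⬝ᵥ M *ᵥ y = y ⬝ᵥ M *ᵥ x := by
  rw [dotProduct_mulVec, ← mulVec_transpose, hM.eq, dotProduct_comm]

theorem PosSemidef.mulVec_eq_zero_of_add_smul_mulVec_eq_zero (hH : H.PosSemidef)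
    (hM : M.PosSemidef) {l : ℝ} (hl : 0 ≤ l) {x : n → ℝ} (hx : (H + l • M) *ᵥ x = 0) :
    H *ᵥ x = 0 := by
  have hsum : x ⬝ᵥ H *ᵥ x + l * (x ⬝ᵥ M *ᵥ x) = 0 := by
    simpa [add_mulVec, smul_mulVec, dotProduct_add] using congrArg (x ⬝ᵥ ·) hx
  have hHx : 0 ≤ x ⬝ᵥ H *ᵥ x := by simpa using hH.dotProduct_mulVec_nonneg x
  have hMx : 0 ≤ x ⬝ᵥ M *ᵥ x := by simpa using hM.dotProduct_mulVec_nonneg x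
  refine (hH.dotProduct_mulVec_zero_iff x).1 ?_
  simp only [star_trivial]
  nlinarith [mul_nonneg hl hMx]

theorem PosSemidef.dotProduct_mulVec_le_of_mulVec_sub_eq_smul (hA : A.PosSemidef)
    (hM : M.PosSemidef) (hker : ∀ x, A *ᵥ x = 0 → M *ᵥ x = 0) {δ : ℝ} (hδ : 0 ≤ δ)
    {x y : n → ℝ} (h : A *ᵥ (x - y) = δ • M *ᵥ y) :
    y ⬝ᵥ M *ᵥ y ≤ x ⬝ᵥ M *ᵥ x := by
  have hMsymm : M.IsSymm := isHermitian_iff_isSymm.1 hM.isHermitian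
  set z := x - y with hz
  have hcross : 0 ≤ z ⬝ᵥ M *ᵥ y := by
    rcases hδ.eq_or_lt with rfl | hδ
    · rw [hMsymm.dotProduct_mulVec_comm, hker z (by simpa using h), dotProduct_zero]
    · have hAz : 0 ≤ z ⬝ᵥ A *ᵥ z := by simpa using hA.dotProduct_mulVec_nonneg z
      rw [h, dotProduct_smul, smul_eq_mul] at hAz
      exact nonneg_of_mul_nonneg_right (by linarith) hδ
  have hzz : 0 ≤ z ⬝ᵥ M *ᵥ z := by simpa using hM.dotProduct_mulVec_nonneg z
  have hexpand : x ⬝ᵥ M *ᵥ x = z ⬝ᵥ M *ᵥ z + 2 * (z ⬝ᵥ M *ᵥ y) + y ⬝ᵥ M *ᵥ y := by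
    rw [show x = z + y by rw [hz, sub_add_cancel], mulVec_add, dotProduct_add, add_dotProduct,
      add_dotProduct, hMsymm.dotProduct_mulVec_comm y z]
    ring
  linarith

end Matrix

namespace IsMoorePenrose

variable {d : ℕ} {A B P Q : Matrix (Fin d) (Fin d) ℝ}

theorem mul_mul_self (hA : A.IsSymm) (hP : IsMoorePenrose A P) : A * (A * P) = A := by
  have h := congrArg transpose hP.1
  rwa [transpose_mul, hA.eq, hP.2.2.1] at h

theorem mul_mul_eq_of_ker_le (hA : A.IsSymm) (hP : IsMoorePenrose A P)
    (hker : ∀ x, A *ᵥ x = 0 → B *ᵥ x = 0) : B * (A * P) = B := by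
  refine ext_iff_mulVec.2 fun x => ?_
  have hx : A *ᵥ (x - (A * P) *ᵥ x) = 0 := by
    rw [mulVec_sub, mulVec_mulVec, hP.mul_mul_self hA, sub_self]
  have := hker _ hx
  rw [mulVec_sub, sub_eq_zero, mulVec_mulVec] at this
  exact this.symm

theorem mul_eq_mul_of_ker_eq (hA : A.IsSymm) (hB : B.IsSymm) (hP : IsMoorePenrose A P)
    (hQ : IsMoorePenrose B Q) (hker : ∀ x, A *ᵥ x = 0 ↔ B *ᵥ x = 0) : A * P = B * Q := by
  have hAPB : A * P * B = B := by
    simpa only [transpose_mul, hB.eq, hP.2.2.1] using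
      congrArg transpose (hP.mul_mul_eq_of_ker_le hA fun x => (hker x).1)
  have hBQA : B * Q * A = A := by
    simpa only [transpose_mul, hA.eq, hQ.2.2.1] using
      congrArg transpose (hQ.mul_mul_eq_of_ker_le hB fun x => (hker x).2)
  calc A * P = (A * P)ᵀ := hP.2.2.1.symm
    _ = (B * Q * A * P)ᵀ := by rw [hBQA]
    _ = A * P * (B * Q) := by rw [mul_assoc, transpose_mul, hP.2.2.1, hQ.2.2.1]
    _ = B * Q := by rw [← mul_assoc, hAPB]

end IsMoorePenrose

theorem stmt9_general {d : ℕ} (H M : Matrix (Fin d) (Fin d) ℝ)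
    (hH : H.PosSemidef) (hM : M.PosSemidef)
    (hker : ∀ x, M.mulVec x = 0 ↔ H.mulVec x = 0)
    (g : Fin d → ℝ) :
    ∀ l1 l2 : ℝ, 0 ≤ l1 → l1 ≤ l2 →
      ∀ P1 P2 : Matrix (Fin d) (Fin d) ℝ,
        IsMoorePenrose (H + l1 • M) P1 → IsMoorePenrose (H + l2 • M) P2 →
        Real.sqrt (P2.mulVec g ⬝ᵥ M.mulVec (P2.mulVec g))
          ≤ Real.sqrt (P1.mulVec g ⬝ᵥ M.mulVec (P1.mulVec g)) := by
  intro l1 l2 hl1 hl12 P1 P2 hP1 hP2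
  have hpsd : ∀ l : ℝ, 0 ≤ l → (H + l • M).PosSemidef := fun l hl => hH.add (hM.smul hl)
  have hsymm : ∀ l : ℝ, 0 ≤ l → (H + l • M).IsSymm := fun l hl =>
    isHermitian_iff_isSymm.1 (hpsd l hl).isHermitian
  have hker_eq : ∀ l : ℝ, 0 ≤ l → ∀ x, (H + l • M) *ᵥ x = 0 ↔ M *ᵥ x = 0 := fun l hl x =>
    ⟨fun hx => (hker x).2 (hH.mulVec_eq_zero_of_add_smul_mulVec_eq_zero hM hl hx),
      fun hx => by simp [add_mulVec, smul_mulVec, hx, (hker x).1 hx]⟩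
  have hl2 := hl1.trans hl12
  have hproj : (H + l1 • M) * P1 = (H + l2 • M) * P2 :=
    hP1.mul_eq_mul_of_ker_eq (hsymm l1 hl1) (hsymm l2 hl2) hP2 fun x =>
      (hker_eq l1 hl1 x).trans (hker_eq l2 hl2 x).symm
  have hstep : (H + l1 • M) *ᵥ (P1 *ᵥ g - P2 *ᵥ g) = (l2 - l1) • M *ᵥ (P2 *ᵥ g) := by
    rw [mulVec_sub, mulVec_mulVec, hproj, ← mulVec_mulVec, add_mulVec, add_mulVec, smul_mulVec,
      smul_mulVec, sub_smul]
    abel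
  exact Real.sqrt_le_sqrt <| (hpsd l1 hl1).dotProduct_mulVec_le_of_mulVec_sub_eq_smul hM
    (fun x => (hker_eq l1 hl1 x).1) (sub_nonneg.2 hl12) hstep

/-- `λ ↦ ‖(H + λM)† g‖_M` is nonincreasing on `λ ≥ 0`. -/
theorem stmt9 {d : ℕ} (H M : Matrix (Fin d) (Fin d) ℝ)
    (hH : H.PosSemidef) (hM : M.PosSemidef)
    (hker : ∀ x, M.mulVec x = 0 ↔ H.mulVec x = 0)
    (μ : ℝ) (hμ : 0 < μ) (hdom : (H - μ • M).PosSemidef)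
    (g : Fin d → ℝ) :
    ∀ l1 l2 : ℝ, 0 ≤ l1 → l1 ≤ l2 →
      ∀ P1 P2 : Matrix (Fin d) (Fin d) ℝ,
        IsMoorePenrose (H + l1 • M) P1 → IsMoorePenrose (H + l2 • M) P2 →
        Real.sqrt (P2.mulVec g ⬝ᵥ M.mulVec (P2.mulVec g))
          ≤ Real.sqrt (P1.mulVec g ⬝ᵥ M.mulVec (P1.mulVec g)) :=
  stmt9_general H M hH hM hker g
end

section
/- Trust region optimality characterization: Let H, M be symmetric PSD matrices with μM ⪯ H ⪯ LM for some 0 < μ ≤ L (so they share a kernel), let g ∈ Im(M), and r > 0. Then there exists λ ≥ 0 such that x_Q = (H + λM)† g is a minimizer of Q(x) = −gᵀx + (1/2)xᵀHx over the ball {x : ‖x‖_M ≤ r}, this λ is unique, and if λ > 0 then ‖x_Q‖_M = r. -/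
open Matrix

/-!
Write `N λ = H + λ M` and let `P₀` be the orthogonal projection onto `ker M`, which `H`
annihilates because `H ⪯ L M`. For `λ ≥ 0` the matrix `N λ + P₀` is positive definite because
`μ M ⪯ H`, so `(N λ + P₀)⁻¹ - P₀` is the pseudoinverse of `N λ`, and `x λ = (N λ + P₀)⁻¹ g`
solves `N λ x = g` and depends continuously on `λ`. Writing `g = M w`, one has
`λ² ‖x λ‖²_M ≤ ‖w‖²_M`, so the intermediate value theorem yields a `λ` satisfying the KKT
conditions (feasibility, and `‖x λ‖_M = r` when `λ > 0`). The identity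
`Q y - Q x = ½ (y - x)ᵀ N λ (y - x) + λ/2 (‖x‖²_M - ‖y‖²_M)` shows that these conditions are
sufficient for optimality. The same identity shows that for two optimal multipliers `λ₁ < λ₂`
the solutions differ by a vector in `ker H ∩ ker M`; then `(λ₁ - λ₂) M x₂ = 0`, so `x₂` has
`M`-norm `0 ≠ r`.
-/

namespace Matrix

variable {n : Type*}

lemma IsSymm.dotProduct_mulVec_comm_s10 [Fintype n] {R : Type*} [CommSemiring R] {A : Matrix n n R}
    (hA : A.IsSymm) (x y : n → R) : x ⬝ᵥ A *ᵥ y = y ⬝ᵥ A *ᵥ x := by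
  rw [dotProduct_mulVec, ← mulVec_transpose, hA.eq, dotProduct_comm]

namespace PosSemidef

variable {A : Matrix n n ℝ}

lemma isSymm (hA : A.PosSemidef) : A.IsSymm :=
  isHermitian_iff_isSymm.1 hA.isHermitian

variable [Fintype n]

lemma dotProduct_mulVec_self_nonneg (hA : A.PosSemidef) (x : n → ℝ) : 0 ≤ x ⬝ᵥ A *ᵥ x := by
  simpa using hA.dotProduct_mulVec_nonneg x

lemma mulVec_eq_zero_of_dotProduct_mulVec_self_eq_zero (hA : A.PosSemidef) {x : n → ℝ}
    (hx : x ⬝ᵥ A *ᵥ x = 0) : A *ᵥ x = 0 :=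
  (hA.dotProduct_mulVec_zero_iff x).1 (by simpa using hx)

lemma mulVec_eq_zero_of_smul_sub_posSemidef {B : Matrix n n ℝ} {L : ℝ} (hA : A.PosSemidef)
    (hBA : (L • B - A).PosSemidef) {x : n → ℝ} (hx : B *ᵥ x = 0) : A *ᵥ x = 0 := by
  refine hA.mulVec_eq_zero_of_dotProduct_mulVec_self_eq_zero (le_antisymm ?_ ?_)
  · have := hBA.dotProduct_mulVec_self_nonneg x
    simpa [sub_mulVec, smul_mulVec, hx] using this
  · exact hA.dotProduct_mulVec_self_nonneg x

end PosSemidef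

variable [Fintype n]

structure IsKernelProjection (M P : Matrix n n ℝ) : Prop where
  isSymm : P.IsSymm
  mul_self : P * P = P
  mul_eq_zero : M * P = 0
  mulVec_eq_self : ∀ x, M *ᵥ x = 0 → P *ᵥ x = x

/-- The projection is `1 - M M†`: the functional calculus applied to `x ↦ x⁻¹` gives the
pseudoinverse `M†` because `0⁻¹ = 0`. -/
lemma exists_isKernelProjection [DecidableEq n] {M : Matrix n n ℝ} (hM : M.IsHermitian) :
    ∃ P, IsKernelProjection M P := by
  have hcont (f : ℝ → ℝ) : ContinuousOn f (spectrum ℝ M) := M.finite_real_spectrum.continuousOn _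
  have hM' : IsSelfAdjoint M := hM.isSelfAdjoint
  set R := cfc (fun x : ℝ => x * x⁻¹) M
  have hMR : M * R = M := by
    rw [← cfc_id' ℝ M, ← cfc_mul _ _ M (hcont _) (hcont _)]
    simp_rw [← mul_assoc, mul_self_mul_inv]
  have hRR : R * R = R := by
    rw [← cfc_mul _ _ M (hcont _) (hcont _)]
    congr 1
    ext x
    by_cases hx : x = 0 <;> simp [hx]
  have hR : R = cfc (·⁻¹ : ℝ → ℝ) M * M := by
    nth_rw 2 [← cfc_id' ℝ M]
    rw [← cfc_mul _ _ M (hcont _) (hcont _)]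
    simp_rw [mul_comm (_ : ℝ)⁻¹]
    rfl
  refine ⟨1 - R, ⟨?_, ?_, ?_, fun x hx => ?_⟩⟩
  · rw [IsSymm, transpose_sub, transpose_one, ← conjTranspose_eq_transpose_of_trivial,
      ← star_eq_conjTranspose, (cfc_predicate _ M : IsSelfAdjoint R).star_eq]
  · rw [sub_mul, mul_sub, mul_sub, hRR]
    simp
  · rw [mul_sub, mul_one, hMR, sub_self]
  · rw [sub_mulVec, one_mulVec, hR, ← mulVec_mulVec, hx, mulVec_zero, sub_zero]

namespace IsKernelProjection

variable {M P : Matrix n n ℝ}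

lemma mulVec_mulVec_eq_zero (hP : IsKernelProjection M P) (hM : M.IsSymm) (w : n → ℝ) :
    P *ᵥ M *ᵥ w = 0 := by
  have hPM : P * M = 0 := by
    rw [← hP.isSymm.eq, ← hM.eq, ← transpose_mul, hP.mul_eq_zero, transpose_zero]
  rw [mulVec_mulVec, hPM, zero_mulVec]

lemma mul_eq_zero_of_ker_le (hP : IsKernelProjection M P) {N : Matrix n n ℝ}
    (hker : ∀ x, M *ᵥ x = 0 → N *ᵥ x = 0) : N * P = 0 := by
  refine ext_iff_mulVec.2 fun v => ?_
  rw [← mulVec_mulVec, zero_mulVec]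
  exact hker _ (by rw [mulVec_mulVec, hP.mul_eq_zero, zero_mulVec])

lemma posDef_add [DecidableEq n] (hP : IsKernelProjection M P) (hM : M.PosSemidef)
    {N : Matrix n n ℝ} {μ : ℝ} (hμ : 0 < μ) (hNM : (N - μ • M).PosSemidef) : (N + P).PosDef := by
  have hN : N.IsHermitian := by
    simpa using hNM.isHermitian.add (hM.smul hμ.le).isHermitian
  refine PosDef.of_dotProduct_mulVec_pos (hN.add (isHermitian_iff_isSymm.2 hP.isSymm))
    fun x hx => ?_
  have hNx : μ * (x ⬝ᵥ M *ᵥ x) ≤ x ⬝ᵥ N *ᵥ x := by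
    have := hNM.dotProduct_mulVec_self_nonneg x
    simp only [sub_mulVec, smul_mulVec, dotProduct_sub, dotProduct_smul, smul_eq_mul] at this
    linarith
  have hPx : x ⬝ᵥ P *ᵥ x = (P *ᵥ x) ⬝ᵥ (P *ᵥ x) := by
    conv_lhs => rw [← hP.mul_self, ← mulVec_mulVec]
    rw [dotProduct_mulVec, ← mulVec_transpose, hP.isSymm.eq]
  have hPx_nonneg : 0 ≤ (P *ᵥ x) ⬝ᵥ (P *ᵥ x) := by
    simpa using dotProduct_star_self_nonneg (P *ᵥ x)
  have hMx_nonneg := hM.dotProduct_mulVec_self_nonneg x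
  rw [star_trivial, add_mulVec, dotProduct_add, hPx]
  by_cases hMx : M *ᵥ x = 0
  · rw [hP.mulVec_eq_self x hMx]
    have hxx : 0 < x ⬝ᵥ x := by simpa using dotProduct_star_self_pos_iff.2 hx
    nlinarith
  · have hxMx : 0 < x ⬝ᵥ M *ᵥ x := hMx_nonneg.lt_of_ne
      fun h => hMx (hM.mulVec_eq_zero_of_dotProduct_mulVec_self_eq_zero h.symm)
    nlinarith

end IsKernelProjection

section

variable {R : Type*} [DecidableEq n] [CommRing R] {N P : Matrix n n R}

lemma inv_add_mul_eq_right (hPP : P * P = P) (hNP : N * P = 0)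
    (hK : IsUnit (N + P).det) : (N + P)⁻¹ * P = P := by
  calc (N + P)⁻¹ * P = (N + P)⁻¹ * ((N + P) * P) := by rw [add_mul, hNP, hPP, zero_add]
    _ = P := by rw [← mul_assoc, nonsing_inv_mul _ hK, one_mul]

lemma inv_add_mul_eq_one_sub (hPP : P * P = P) (hNP : N * P = 0)
    (hK : IsUnit (N + P).det) : (N + P)⁻¹ * N = 1 - P := by
  rw [eq_sub_iff_add_eq]
  nth_rw 2 [← inv_add_mul_eq_right hPP hNP hK]
  rw [← mul_add, nonsing_inv_mul _ hK]

lemma mul_inv_add_eq_one_sub (hN : N.IsSymm) (hP : P.IsSymm) (hPP : P * P = P)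
    (hNP : N * P = 0) (hK : IsUnit (N + P).det) : N * (N + P)⁻¹ = 1 - P := by
  have h := congrArg transpose (inv_add_mul_eq_one_sub hPP hNP hK)
  rwa [transpose_mul, transpose_nonsing_inv, transpose_add, hN.eq, hP.eq, transpose_sub,
    transpose_one, hP.eq] at h

end

end Matrix

lemma isMoorePenrose_inv_add_sub {d : ℕ} {N P : Matrix (Fin d) (Fin d) ℝ} (hN : N.IsSymm)
    (hP : P.IsSymm) (hPP : P * P = P) (hNP : N * P = 0) (hK : IsUnit (N + P).det) :
    IsMoorePenrose N ((N + P)⁻¹ - P) := by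
  have hPN : P * N = 0 := by
    rw [← hP.eq, ← hN.eq, ← transpose_mul, hNP, transpose_zero]
  have hleft : N * ((N + P)⁻¹ - P) = 1 - P := by
    rw [mul_sub, mul_inv_add_eq_one_sub hN hP hPP hNP hK, hNP, sub_zero]
  have hright : ((N + P)⁻¹ - P) * N = 1 - P := by
    rw [sub_mul, inv_add_mul_eq_one_sub hPP hNP hK, hPN, sub_zero]
  have hPB : P * ((N + P)⁻¹ - P) = 0 := by
    have h := congrArg transpose (inv_add_mul_eq_right hPP hNP hK)
    rw [transpose_mul, transpose_nonsing_inv, transpose_add, hN.eq, hP.eq] at h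
    rw [mul_sub, h, hPP, sub_self]
  refine ⟨?_, ?_, ?_, ?_⟩
  · rw [hleft, sub_mul, one_mul, hPN, sub_zero]
  · rw [hright, sub_mul, one_mul, hPB, sub_zero]
  · rw [hleft, transpose_sub, transpose_one, hP.eq]
  · rw [hright, transpose_sub, transpose_one, hP.eq]

lemma IsMoorePenrose.mulVec_mulVec_of_mulVec_eq {d : ℕ} {A P : Matrix (Fin d) (Fin d) ℝ}
    (hP : IsMoorePenrose A P) {y g : Fin d → ℝ} (hy : A *ᵥ y = g) : A *ᵥ P *ᵥ g = g := by
  rw [← hy, mulVec_mulVec, mulVec_mulVec, hP.1]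

lemma continuousOn_matrix_inv {n : Type*} [Fintype n] [DecidableEq n] {A : ℝ → Matrix n n ℝ}
    {s : Set ℝ} (hA : Continuous A) (hdet : ∀ t ∈ s, (A t).det ≠ 0) :
    ContinuousOn (fun t => (A t)⁻¹) s := by
  intro t ht
  have hinv : ContinuousAt Ring.inverse (A t).det := by
    simpa [Ring.inverse_eq_inv'] using continuousAt_inv₀ (hdet t ht)
  exact ((continuousAt_matrix_inv _ hinv).comp hA.continuousAt).continuousWithinAt

lemma exists_nonneg_le_and_eq_of_pos {φ : ℝ → ℝ} {c t₁ : ℝ} (hφ : ContinuousOn φ (Set.Ici 0))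
    (ht₁ : 0 ≤ t₁) (h₁ : φ t₁ ≤ c) : ∃ t, 0 ≤ t ∧ φ t ≤ c ∧ (0 < t → φ t = c) := by
  by_cases h₀ : φ 0 ≤ c
  · exact ⟨0, le_rfl, h₀, fun h => absurd h (lt_irrefl 0)⟩
  obtain ⟨t, ht, hφt⟩ := intermediate_value_Icc' ht₁ (hφ.mono fun _ h => h.1)
    ⟨h₁, (not_le.1 h₀).le⟩
  exact ⟨t, ht.1, hφt.le, fun _ => hφt⟩

section TrustRegion

variable {n : Type*} [Fintype n] {H M : Matrix n n ℝ} {g : n → ℝ} {r : ℝ}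

noncomputable def trustRegionObjective (H : Matrix n n ℝ) (g x : n → ℝ) : ℝ :=
  -(g ⬝ᵥ x) + (1 / 2) * (x ⬝ᵥ H *ᵥ x)

def IsTrustRegionMin (H M : Matrix n n ℝ) (g : n → ℝ) (r : ℝ) (x : n → ℝ) : Prop :=
  √(x ⬝ᵥ M *ᵥ x) ≤ r ∧
    ∀ y, √(y ⬝ᵥ M *ᵥ y) ≤ r → trustRegionObjective H g x ≤ trustRegionObjective H g y

lemma dotProduct_add_smul_mulVec (u v : n → ℝ) (lam : ℝ) :
    u ⬝ᵥ (H + lam • M) *ᵥ v = u ⬝ᵥ H *ᵥ v + lam * (u ⬝ᵥ M *ᵥ v) := by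
  rw [add_mulVec, dotProduct_add, smul_mulVec, dotProduct_smul, smul_eq_mul]

lemma trustRegionObjective_sub (hH : H.IsSymm) (hM : M.IsSymm) {lam : ℝ} {x : n → ℝ}
    (hx : (H + lam • M) *ᵥ x = g) (y : n → ℝ) :
    trustRegionObjective H g y - trustRegionObjective H g x =
      (1 / 2) * ((y - x) ⬝ᵥ (H + lam • M) *ᵥ (y - x)) +
        lam / 2 * (x ⬝ᵥ M *ᵥ x - y ⬝ᵥ M *ᵥ y) := by
  have hN := hH.add (hM.smul lam)
  have hgy : g ⬝ᵥ y = x ⬝ᵥ (H + lam • M) *ᵥ y := by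
    rw [hN.dotProduct_mulVec_comm_s10, hx, dotProduct_comm]
  have hgx : g ⬝ᵥ x = x ⬝ᵥ (H + lam • M) *ᵥ x := by rw [hx, dotProduct_comm]
  unfold trustRegionObjective
  rw [mulVec_sub, dotProduct_sub, sub_dotProduct, sub_dotProduct, hN.dotProduct_mulVec_comm_s10 y x,
    hgy, hgx, dotProduct_add_smul_mulVec, dotProduct_add_smul_mulVec, dotProduct_add_smul_mulVec]
  ring

lemma isTrustRegionMin_of_kkt (hH : H.PosSemidef) (hM : M.PosSemidef) {lam : ℝ} {x : n → ℝ}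
    (hlam : 0 ≤ lam) (hx : (H + lam • M) *ᵥ x = g) (hfeas : √(x ⬝ᵥ M *ᵥ x) ≤ r)
    (hslack : 0 < lam → √(x ⬝ᵥ M *ᵥ x) = r) : IsTrustRegionMin H M g r x := by
  refine ⟨hfeas, fun y hy => ?_⟩
  have hr : 0 ≤ r := (Real.sqrt_nonneg _).trans hfeas
  have hgap : lam * (y ⬝ᵥ M *ᵥ y) ≤ lam * (x ⬝ᵥ M *ᵥ x) := by
    rcases hlam.eq_or_lt with rfl | hpos
    · simp
    · rw [← Real.sq_sqrt (hM.dotProduct_mulVec_self_nonneg x), hslack hpos]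
      exact mul_le_mul_of_nonneg_left ((Real.sqrt_le_left hr).1 hy) hlam
  have hN : (H + lam • M).PosSemidef := hH.add (hM.smul hlam)
  have := trustRegionObjective_sub hH.isSymm hM.isSymm hx y
  nlinarith [hN.dotProduct_mulVec_self_nonneg (y - x)]

lemma eq_of_isTrustRegionMin (hH : H.PosSemidef) (hM : M.PosSemidef) (hr : r ≠ 0)
    {l₁ l₂ : ℝ} {x₁ x₂ : n → ℝ} (hl₁ : 0 ≤ l₁) (hl₂ : 0 ≤ l₂)
    (hx₁ : (H + l₁ • M) *ᵥ x₁ = g) (hx₂ : (H + l₂ • M) *ᵥ x₂ = g)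
    (hmin₁ : IsTrustRegionMin H M g r x₁) (hmin₂ : IsTrustRegionMin H M g r x₂)
    (hslack₁ : 0 < l₁ → √(x₁ ⬝ᵥ M *ᵥ x₁) = r) (hslack₂ : 0 < l₂ → √(x₂ ⬝ᵥ M *ᵥ x₂) = r) :
    l₁ = l₂ := by
  by_contra hne
  wlog hlt : l₁ < l₂ generalizing l₁ l₂ x₁ x₂
  · exact this hl₂ hl₁ hx₂ hx₁ hmin₂ hmin₁ hslack₂ hslack₁ (Ne.symm hne)
      ((not_lt.1 hlt).lt_of_ne (Ne.symm hne))
  have hl₂pos : 0 < l₂ := hl₁.trans_lt hlt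
  have hr' : 0 ≤ r := (Real.sqrt_nonneg _).trans hmin₁.1
  have hb₁ : x₁ ⬝ᵥ M *ᵥ x₁ ≤ r ^ 2 := (Real.sqrt_le_left hr').1 hmin₁.1
  have hb₂ : x₂ ⬝ᵥ M *ᵥ x₂ = r ^ 2 :=
    (Real.sqrt_eq_iff_eq_sq (hM.dotProduct_mulVec_self_nonneg _) hr').1 (hslack₂ hl₂pos)
  set z := x₁ - x₂ with hz
  have hzN : z ⬝ᵥ H *ᵥ z + l₂ * (z ⬝ᵥ M *ᵥ z) ≤ 0 := by
    have hgap := trustRegionObjective_sub hH.isSymm hM.isSymm hx₂ x₁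
    rw [← hz, dotProduct_add_smul_mulVec, hb₂] at hgap
    nlinarith [hmin₁.2 x₂ hmin₂.1, mul_nonneg hl₂ (sub_nonneg.2 hb₁)]
  have hzH := hH.dotProduct_mulVec_self_nonneg z
  have hzM := hM.dotProduct_mulVec_self_nonneg z
  have hHz : H *ᵥ z = 0 :=
    hH.mulVec_eq_zero_of_dotProduct_mulVec_self_eq_zero (by nlinarith)
  have hMz : M *ᵥ z = 0 :=
    hM.mulVec_eq_zero_of_dotProduct_mulVec_self_eq_zero (by nlinarith)
  have hNz : (H + l₁ • M) *ᵥ z = 0 := by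
    rw [add_mulVec, smul_mulVec, hHz, hMz, smul_zero, add_zero]
  have hMx₂ : (l₁ - l₂) • M *ᵥ x₂ = 0 := by
    have h : (H + l₁ • M) *ᵥ x₂ = (H + l₂ • M) *ᵥ x₂ := by
      rw [hx₂, ← hx₁, show x₁ = x₂ + z by simp [hz], mulVec_add, hNz, add_zero]
    rw [add_mulVec, add_mulVec, smul_mulVec, smul_mulVec] at h
    rw [sub_smul, add_left_cancel h, sub_self]
  rw [(smul_eq_zero.1 hMx₂).resolve_left (sub_ne_zero.2 hne), dotProduct_zero] at hb₂
  exact hr (pow_eq_zero_iff two_ne_zero |>.1 hb₂.symm)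

lemma sq_mul_dotProduct_mulVec_le (hH : H.PosSemidef) (hM : M.PosSemidef) {lam : ℝ}
    (hlam : 0 ≤ lam) {x w : n → ℝ} (hx : (H + lam • M) *ᵥ x = M *ᵥ w) :
    lam ^ 2 * (x ⬝ᵥ M *ᵥ x) ≤ w ⬝ᵥ M *ᵥ w := by
  have hxw : x ⬝ᵥ M *ᵥ w = x ⬝ᵥ H *ᵥ x + lam * (x ⬝ᵥ M *ᵥ x) := by
    rw [← hx, dotProduct_add_smul_mulVec]
  have hsq := hM.dotProduct_mulVec_self_nonneg (lam • x - w)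
  simp only [mulVec_sub, mulVec_smul, dotProduct_sub, sub_dotProduct, dotProduct_smul,
    smul_dotProduct, smul_eq_mul, hM.isSymm.dotProduct_mulVec_comm_s10 w x, hxw] at hsq
  nlinarith [mul_nonneg hlam (hH.dotProduct_mulVec_self_nonneg x)]

lemma exists_kkt_multiplier (hH : H.PosSemidef) (hM : M.PosSemidef) (hr : 0 < r) {w : n → ℝ}
    {x : ℝ → n → ℝ} (hcont : ContinuousOn x (Set.Ici 0))
    (hx : ∀ lam, 0 ≤ lam → (H + lam • M) *ᵥ x lam = M *ᵥ w) :
    ∃ lam, 0 ≤ lam ∧ √(x lam ⬝ᵥ M *ᵥ x lam) ≤ r ∧ (0 < lam → √(x lam ⬝ᵥ M *ᵥ x lam) = r) := by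
  set c := √(w ⬝ᵥ M *ᵥ w)
  set lam₁ := c / r + 1
  have hlam₁ : 0 < lam₁ := by positivity
  refine exists_nonneg_le_and_eq_of_pos ?_ hlam₁.le ?_
  · exact (Real.continuous_sqrt.comp
      (continuous_id.dotProduct (continuous_const.matrix_mulVec continuous_id))).comp_continuousOn
      hcont
  · -- `λ₁ ‖x λ₁‖_M ≤ ‖w‖_M < λ₁ r`
    have hbound : lam₁ * √(x lam₁ ⬝ᵥ M *ᵥ x lam₁) ≤ c :=
      calc lam₁ * √(x lam₁ ⬝ᵥ M *ᵥ x lam₁) = √(lam₁ ^ 2 * (x lam₁ ⬝ᵥ M *ᵥ x lam₁)) := by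
            rw [Real.sqrt_mul (sq_nonneg _), Real.sqrt_sq hlam₁.le]
        _ ≤ c := Real.sqrt_le_sqrt (sq_mul_dotProduct_mulVec_le hH hM hlam₁.le (hx _ hlam₁.le))
    have hlam₁r : lam₁ * r = c + r := by rw [add_mul, div_mul_cancel₀ _ hr.ne', one_mul]
    nlinarith [Real.sqrt_nonneg (x lam₁ ⬝ᵥ M *ᵥ x lam₁)]

end TrustRegion

theorem stmt10_general {d : ℕ} (H M : Matrix (Fin d) (Fin d) ℝ)
    (hH : H.PosSemidef) (hM : M.PosSemidef)
    (μ L : ℝ) (hμ : 0 < μ)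
    (hlow : (H - μ • M).PosSemidef) (hup : (L • M - H).PosSemidef)
    (g : Fin d → ℝ) (hg : g ∈ Set.range M.mulVec) (r : ℝ) (hr : 0 < r) :
    ∃ lam : ℝ, ∃ P : Matrix (Fin d) (Fin d) ℝ,
      0 ≤ lam ∧ IsMoorePenrose (H + lam • M) P ∧
      (Real.sqrt (P.mulVec g ⬝ᵥ M.mulVec (P.mulVec g)) ≤ r ∧
        ∀ x : Fin d → ℝ, Real.sqrt (x ⬝ᵥ M.mulVec x) ≤ r →
          -(g ⬝ᵥ P.mulVec g) + (1 / 2) * (P.mulVec g ⬝ᵥ H.mulVec (P.mulVec g))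
            ≤ -(g ⬝ᵥ x) + (1 / 2) * (x ⬝ᵥ H.mulVec x)) ∧
      (0 < lam → Real.sqrt (P.mulVec g ⬝ᵥ M.mulVec (P.mulVec g)) = r) ∧
      (∀ lam' : ℝ, ∀ P' : Matrix (Fin d) (Fin d) ℝ,
        0 ≤ lam' → IsMoorePenrose (H + lam' • M) P' →
        (Real.sqrt (P'.mulVec g ⬝ᵥ M.mulVec (P'.mulVec g)) ≤ r ∧
          ∀ x : Fin d → ℝ, Real.sqrt (x ⬝ᵥ M.mulVec x) ≤ r →
            -(g ⬝ᵥ P'.mulVec g) + (1 / 2) * (P'.mulVec g ⬝ᵥ H.mulVec (P'.mulVec g))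
              ≤ -(g ⬝ᵥ x) + (1 / 2) * (x ⬝ᵥ H.mulVec x)) →
        (0 < lam' → Real.sqrt (P'.mulVec g ⬝ᵥ M.mulVec (P'.mulVec g)) = r) →
        lam' = lam) := by
  obtain ⟨w, rfl⟩ := hg
  obtain ⟨P₀, hP₀⟩ := exists_isKernelProjection hM.isHermitian
  have hN (lam : ℝ) : (H + lam • M).IsSymm := hH.isSymm.add (hM.isSymm.smul lam)
  have hNP₀ (lam : ℝ) : (H + lam • M) * P₀ = 0 := hP₀.mul_eq_zero_of_ker_le fun x hx => by
    rw [add_mulVec, smul_mulVec, hx, smul_zero, add_zero,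
      hH.mulVec_eq_zero_of_smul_sub_posSemidef hup hx]
  have hdet (lam : ℝ) (hlam : 0 ≤ lam) : IsUnit (H + lam • M + P₀).det := by
    refine (hP₀.posDef_add hM hμ ?_).det_pos.ne'.isUnit
    simpa only [add_sub_right_comm] using hlow.add (hM.smul hlam)
  set x := fun lam : ℝ => (H + lam • M + P₀)⁻¹ *ᵥ M *ᵥ w
  have hx (lam : ℝ) (hlam : 0 ≤ lam) : (H + lam • M) *ᵥ x lam = M *ᵥ w := by
    rw [mulVec_mulVec, mul_inv_add_eq_one_sub (hN lam) hP₀.isSymm hP₀.mul_self (hNP₀ lam)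
      (hdet lam hlam), sub_mulVec, one_mulVec, hP₀.mulVec_mulVec_eq_zero hM.isSymm, sub_zero]
  have hcont : ContinuousOn x (Set.Ici 0) :=
    (continuous_id.matrix_mulVec continuous_const).comp_continuousOn
      (continuousOn_matrix_inv (by fun_prop) fun lam hlam => (hdet lam hlam).ne_zero)
  obtain ⟨lam, hlam, hfeas, hslack⟩ := exists_kkt_multiplier hH hM hr hcont hx
  have hPg : ((H + lam • M + P₀)⁻¹ - P₀) *ᵥ M *ᵥ w = x lam := by
    rw [sub_mulVec, hP₀.mulVec_mulVec_eq_zero hM.isSymm, sub_zero]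
  have hmin := isTrustRegionMin_of_kkt hH hM hlam (hx lam hlam) hfeas hslack
  refine ⟨lam, _, hlam, isMoorePenrose_inv_add_sub (hN lam) hP₀.isSymm hP₀.mul_self (hNP₀ lam)
    (hdet lam hlam), hPg ▸ hmin, hPg ▸ hslack, fun lam' P' hlam' hP' hmin' hslack' => ?_⟩
  exact eq_of_isTrustRegionMin hH hM hr.ne' hlam' hlam
    (hP'.mulVec_mulVec_of_mulVec_eq (hx lam' hlam')) (hx lam hlam) hmin' hmin hslack' hslack

/-- Trust region optimality characterization: `x_Q = (H + λM)† g` minimizes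
`Q(x) = -gᵀx + ½ xᵀHx` over `{x : ‖x‖_M ≤ r}` for a unique `λ ≥ 0`, and if `λ > 0`
then `‖x_Q‖_M = r`. -/
theorem stmt10 {d : ℕ} (H M : Matrix (Fin d) (Fin d) ℝ)
    (hH : H.PosSemidef) (hM : M.PosSemidef)
    (μ L : ℝ) (hμ : 0 < μ) (hμL : μ ≤ L)
    (hlow : (H - μ • M).PosSemidef) (hup : (L • M - H).PosSemidef)
    (g : Fin d → ℝ) (hg : g ∈ Set.range M.mulVec) (r : ℝ) (hr : 0 < r) :
    ∃ lam : ℝ, ∃ P : Matrix (Fin d) (Fin d) ℝ,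
      0 ≤ lam ∧ IsMoorePenrose (H + lam • M) P ∧
      (Real.sqrt (P.mulVec g ⬝ᵥ M.mulVec (P.mulVec g)) ≤ r ∧
        ∀ x : Fin d → ℝ, Real.sqrt (x ⬝ᵥ M.mulVec x) ≤ r →
          -(g ⬝ᵥ P.mulVec g) + (1 / 2) * (P.mulVec g ⬝ᵥ H.mulVec (P.mulVec g))
            ≤ -(g ⬝ᵥ x) + (1 / 2) * (x ⬝ᵥ H.mulVec x)) ∧
      (0 < lam → Real.sqrt (P.mulVec g ⬝ᵥ M.mulVec (P.mulVec g)) = r) ∧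
      (∀ lam' : ℝ, ∀ P' : Matrix (Fin d) (Fin d) ℝ,
        0 ≤ lam' → IsMoorePenrose (H + lam' • M) P' →
        (Real.sqrt (P'.mulVec g ⬝ᵥ M.mulVec (P'.mulVec g)) ≤ r ∧
          ∀ x : Fin d → ℝ, Real.sqrt (x ⬝ᵥ M.mulVec x) ≤ r →
            -(g ⬝ᵥ P'.mulVec g) + (1 / 2) * (P'.mulVec g ⬝ᵥ H.mulVec (P'.mulVec g))
              ≤ -(g ⬝ᵥ x) + (1 / 2) * (x ⬝ᵥ H.mulVec x)) →
        (0 < lam' → Real.sqrt (P'.mulVec g ⬝ᵥ M.mulVec (P'.mulVec g)) = r) →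
        lam' = lam) :=
  stmt10_general H M hH hM μ L hμ hlow hup g hg r hr
end

section
/- Let H, M be symmetric PSD matrices with μM ⪯ H for μ > 0 sharing a kernel, and g ∈ Im(M) with ‖H†g‖_M > r. Let λ* > 0 satisfy ‖(H + λ*M)†g‖_M = r. Then for any λ > 0 with |λ − λ*| ≤ Δμ²/‖g‖_{M†}, we have ‖(H + λM)†g − (H + λ*M)†g‖_M ≤ Δ. -/
/-!
Write `A_λ = H + λM`, `x_λ = A_λ† g` and `‖·‖_M` for the seminorm of `M`. Since `A_λ ⪰ μM` and
`g ∈ Im M`, the vector `x_λ` solves `A_λ x = g`. A single inequality does all the work: if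
`A ⪰ μM` and `A u = M v`, then `μ ‖u‖²_M ≤ uᵀAu = uᵀMv ≤ ‖u‖_M ‖v‖_M`, so `μ ‖u‖_M ≤ ‖v‖_M`.
Applied to `A_λ (x_λ - x_λ*) = (λ* - λ) M x_λ*` it gives `μ ‖x_λ - x_λ*‖_M ≤ |λ - λ*| r`, and applied to
`H (H† g) = g = M (M† g)` it gives `μ r < μ ‖H† g‖_M ≤ ‖g‖_{M†}`. Together with the bound on
`|λ - λ*|` these yield `‖x_λ - x_λ*‖_M ≤ Δ μ r / ‖g‖_{M†} ≤ Δ`.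
-/

open Matrix

namespace Matrix

variable {n : Type*}

namespace PosSemidef

variable {A M : Matrix n n ℝ} {μ : ℝ}

lemma transpose_eq_of_sub_smul (hM : M.PosSemidef) (hAM : (A - μ • M).PosSemidef) : Aᵀ = A := by
  have hA : A.IsHermitian := by simpa using hAM.1.add (hM.1.smul (IsSelfAdjoint.all μ))
  rwa [IsHermitian, conjTranspose_eq_transpose_of_trivial] at hA

lemma add_smul_sub_smul (hM : M.PosSemidef) (hAM : (A - μ • M).PosSemidef) {t : ℝ}
    (ht : 0 ≤ t) : (A + t • M - μ • M).PosSemidef := by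
  simpa only [add_sub_right_comm] using hAM.add (hM.smul ht)

end PosSemidef

variable [Fintype n]

noncomputable def formNorm (M : Matrix n n ℝ) (x : n → ℝ) : ℝ := √(x ⬝ᵥ M *ᵥ x)

lemma formNorm_nonneg (M : Matrix n n ℝ) (x : n → ℝ) : 0 ≤ formNorm M x :=
  Real.sqrt_nonneg _

lemma formNorm_smul (M : Matrix n n ℝ) (c : ℝ) (x : n → ℝ) :
    formNorm M (c • x) = |c| * formNorm M x := by
  rw [formNorm, formNorm, mulVec_smul, dotProduct_smul, smul_dotProduct, smul_eq_mul,
    smul_eq_mul, ← mul_assoc, Real.sqrt_mul (mul_self_nonneg c), Real.sqrt_mul_self_eq_abs]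

lemma mulVec_dotProduct_eq_zero {A : Matrix n n ℝ} (hA : Aᵀ = A) {w : n → ℝ}
    (hw : A *ᵥ w = 0) (u : n → ℝ) : (A *ᵥ u) ⬝ᵥ w = 0 := by
  rw [dotProduct_comm, ← dotProduct_transpose_mulVec, hA, hw, dotProduct_zero]

namespace PosSemidef

variable {M : Matrix n n ℝ}

lemma formNorm_sq (hM : M.PosSemidef) (x : n → ℝ) : formNorm M x ^ 2 = x ⬝ᵥ M *ᵥ x :=
  Real.sq_sqrt (hM.dotProduct_mulVec_nonneg x)

lemma abs_dotProduct_mulVec_le (hM : M.PosSemidef) (x y : n → ℝ) :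
    |x ⬝ᵥ M *ᵥ y| ≤ formNorm M x * formNorm M y := by
  let := M.toSeminormedAddCommGroup hM
  let := M.toInnerProductSpace hM
  have hinner (u v : n → ℝ) : inner ℝ u v = u ⬝ᵥ M *ᵥ v := by
    change (M *ᵥ v) ⬝ᵥ star u = _
    rw [dotProduct_comm]
    rfl
  simpa only [formNorm, norm_eq_sqrt_real_inner, hinner] using abs_real_inner_le_norm x y

lemma dotProduct_eq_zero_of_mem_range (hM : M.PosSemidef) {g : n → ℝ}
    (hg : g ∈ Set.range M.mulVec) {z : n → ℝ} (hz : M *ᵥ z = 0) : g ⬝ᵥ z = 0 := by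
  obtain ⟨u, rfl⟩ := hg
  exact mulVec_dotProduct_eq_zero hM.1 hz u

variable {A : Matrix n n ℝ} {μ : ℝ}

lemma mul_dotProduct_mulVec_le (hAM : (A - μ • M).PosSemidef) (x : n → ℝ) :
    μ * (x ⬝ᵥ M *ᵥ x) ≤ x ⬝ᵥ A *ᵥ x := by
  have h := hAM.dotProduct_mulVec_nonneg x
  rw [sub_mulVec, dotProduct_sub, smul_mulVec, dotProduct_smul, smul_eq_mul] at h
  exact sub_nonneg.mp h

lemma mul_formNorm_le_of_mulVec_eq (hM : M.PosSemidef) (hAM : (A - μ • M).PosSemidef)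
    {u v : n → ℝ} (h : A *ᵥ u = M *ᵥ v) : μ * formNorm M u ≤ formNorm M v := by
  have hsq : μ * formNorm M u * formNorm M u ≤ formNorm M v * formNorm M u := calc
    μ * formNorm M u * formNorm M u = μ * (u ⬝ᵥ M *ᵥ u) := by rw [mul_assoc, ← sq, hM.formNorm_sq]
    _ ≤ u ⬝ᵥ A *ᵥ u := mul_dotProduct_mulVec_le hAM u
    _ = u ⬝ᵥ M *ᵥ v := by rw [h]
    _ ≤ formNorm M u * formNorm M v := (le_abs_self _).trans (hM.abs_dotProduct_mulVec_le u v)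
    _ = formNorm M v * formNorm M u := mul_comm _ _
  rcases (formNorm_nonneg M u).eq_or_lt with hu | hu
  · rw [← hu, mul_zero]
    exact formNorm_nonneg M v
  · exact le_of_mul_le_mul_right hsq hu

lemma mulVec_eq_zero_of_mulVec_eq_zero (hM : M.PosSemidef) (hμ : 0 < μ)
    (hAM : (A - μ • M).PosSemidef) {z : n → ℝ} (hz : A *ᵥ z = 0) : M *ᵥ z = 0 := by
  have h := hM.mul_formNorm_le_of_mulVec_eq hAM (v := 0) (by rw [hz, mulVec_zero])
  have hzero : formNorm M z = 0 := by
    have h0 : formNorm M (0 : n → ℝ) = 0 := by simp [formNorm]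
    rw [h0] at h
    exact le_antisymm (nonpos_of_mul_nonpos_right h hμ) (formNorm_nonneg M z)
  rw [← hM.dotProduct_mulVec_zero_iff, star_trivial, ← hM.formNorm_sq, hzero]
  norm_num

lemma mul_formNorm_sub_le {H : Matrix n n ℝ} (hM : M.PosSemidef) (hHM : (H - μ • M).PosSemidef)
    {lam lamstar : ℝ} (hlam : 0 ≤ lam) {g x xs : n → ℝ} (hx : (H + lam • M) *ᵥ x = g)
    (hxs : (H + lamstar • M) *ᵥ xs = g) :
    μ * formNorm M (x - xs) ≤ |lam - lamstar| * formNorm M xs := by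
  have hdiff : (H + lam • M) *ᵥ (x - xs) = M *ᵥ ((lamstar - lam) • xs) := by
    rw [mulVec_sub, hx, ← hxs, add_mulVec, add_mulVec, smul_mulVec, smul_mulVec, mulVec_smul]
    module
  rw [abs_sub_comm, ← formNorm_smul]
  exact hM.mul_formNorm_le_of_mulVec_eq (hM.add_smul_sub_smul hHM hlam) hdiff

end PosSemidef

end Matrix

namespace IsMoorePenrose

variable {d : ℕ} {A B : Matrix (Fin d) (Fin d) ℝ}

lemma mul_mul_self_eq (hA : Aᵀ = A) (hB : IsMoorePenrose A B) : A * A * B = A := calc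
  A * A * B = (A * B * A)ᵀ := by rw [transpose_mul, hA, hB.2.2.1, mul_assoc]
  _ = A := by rw [hB.1, hA]

lemma mulVec_mulVec_eq (hA : Aᵀ = A) (hB : IsMoorePenrose A B) {g : Fin d → ℝ}
    (hg : ∀ z, A *ᵥ z = 0 → g ⬝ᵥ z = 0) : A *ᵥ (B *ᵥ g) = g := by
  set w := g - A *ᵥ (B *ᵥ g)
  have hAw : A *ᵥ w = 0 := by
    rw [mulVec_sub, mulVec_mulVec, mulVec_mulVec, hB.mul_mul_self_eq hA, sub_self]
  have hw : w ⬝ᵥ w = 0 := by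
    rw [sub_dotProduct, hg w hAw, mulVec_dotProduct_eq_zero hA hAw, sub_zero]
  exact (sub_eq_zero.mp (dotProduct_self_eq_zero.mp hw)).symm

lemma mulVec_mulVec_eq_of_posSemidef_sub_smul {M : Matrix (Fin d) (Fin d) ℝ} {μ : ℝ}
    (hM : M.PosSemidef) (hμ : 0 < μ) (hAM : (A - μ • M).PosSemidef) (hB : IsMoorePenrose A B)
    {g : Fin d → ℝ} (hg : g ∈ Set.range M.mulVec) : A *ᵥ (B *ᵥ g) = g :=
  hB.mulVec_mulVec_eq (hM.transpose_eq_of_sub_smul hAM) fun _ hz =>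
    hM.dotProduct_eq_zero_of_mem_range hg (hM.mulVec_eq_zero_of_mulVec_eq_zero hμ hAM hz)

lemma mul_formNorm_mulVec_le {M Mdag : Matrix (Fin d) (Fin d) ℝ} {μ : ℝ} (hB : IsMoorePenrose A B)
    (hMdag : IsMoorePenrose M Mdag) (hM : M.PosSemidef) (hμ : 0 < μ)
    (hAM : (A - μ • M).PosSemidef) {g : Fin d → ℝ} (hg : g ∈ Set.range M.mulVec) :
    μ * formNorm M (B *ᵥ g) ≤ √(g ⬝ᵥ Mdag *ᵥ g) := by
  have hMg : M *ᵥ (Mdag *ᵥ g) = g :=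
    hMdag.mulVec_mulVec_eq hM.1 fun _ => hM.dotProduct_eq_zero_of_mem_range hg
  have hg_norm : √(g ⬝ᵥ Mdag *ᵥ g) = formNorm M (Mdag *ᵥ g) := by
    rw [formNorm, hMg, dotProduct_comm]
  rw [hg_norm]
  exact hM.mul_formNorm_le_of_mulVec_eq hAM
    (by rw [hB.mulVec_mulVec_eq_of_posSemidef_sub_smul hM hμ hAM hg, hMg])

end IsMoorePenrose

theorem stmt11_general {d : ℕ} (H M Mdag Hdag : Matrix (Fin d) (Fin d) ℝ)
    (hM : M.PosSemidef)
    (hMdag : IsMoorePenrose M Mdag) (hHdag : IsMoorePenrose H Hdag)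
    (μ : ℝ) (hμ : 0 < μ) (hdom : (H - μ • M).PosSemidef)
    (g : Fin d → ℝ) (hg : g ∈ Set.range M.mulVec)
    (r Δ : ℝ)
    (hfar : r < Real.sqrt (Hdag.mulVec g ⬝ᵥ M.mulVec (Hdag.mulVec g)))
    (lamstar : ℝ) (hlamstar : 0 < lamstar)
    (Pstar : Matrix (Fin d) (Fin d) ℝ) (hPstar : IsMoorePenrose (H + lamstar • M) Pstar)
    (hbd : Real.sqrt (Pstar.mulVec g ⬝ᵥ M.mulVec (Pstar.mulVec g)) = r)
    (lam : ℝ) (hlam : 0 < lam)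
    (P : Matrix (Fin d) (Fin d) ℝ) (hP : IsMoorePenrose (H + lam • M) P)
    (hclose : |lam - lamstar| ≤ Δ * μ ^ 2 / Real.sqrt (g ⬝ᵥ Mdag.mulVec g)) :
    Real.sqrt ((P.mulVec g - Pstar.mulVec g) ⬝ᵥ M.mulVec (P.mulVec g - Pstar.mulVec g))
      ≤ Δ := by
  change formNorm M (P *ᵥ g - Pstar *ᵥ g) ≤ Δ
  change formNorm M (Pstar *ᵥ g) = r at hbd
  change r < formNorm M (Hdag *ᵥ g) at hfar
  have hsolve {t : ℝ} (ht : 0 < t) {Q : Matrix (Fin d) (Fin d) ℝ}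
      (hQ : IsMoorePenrose (H + t • M) Q) : (H + t • M) *ᵥ (Q *ᵥ g) = g :=
    hQ.mulVec_mulVec_eq_of_posSemidef_sub_smul hM hμ (hM.add_smul_sub_smul hdom ht.le) hg
  have hstab := hM.mul_formNorm_sub_le hdom hlam.le (hsolve hlam hP) (hsolve hlamstar hPstar)
  rw [hbd] at hstab
  have hHdag_le := hHdag.mul_formNorm_mulVec_le hMdag hM hμ hdom hg
  set s := √(g ⬝ᵥ Mdag *ᵥ g)
  have hr : 0 ≤ r := hbd ▸ formNorm_nonneg M _
  have hμr : μ * r < s := (mul_lt_mul_of_pos_left hfar hμ).trans_le hHdag_le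
  have hs : 0 < s := (mul_nonneg hμ.le hr).trans_lt hμr
  have hΔ : 0 ≤ Δ := nonneg_of_mul_nonneg_left
    (by simpa using (le_div_iff₀ hs).mp ((abs_nonneg _).trans hclose)) (pow_pos hμ 2)
  refine le_of_mul_le_mul_left ?_ hμ
  calc μ * formNorm M (P *ᵥ g - Pstar *ᵥ g) ≤ |lam - lamstar| * r := hstab
    _ ≤ Δ * μ ^ 2 / s * r := mul_le_mul_of_nonneg_right hclose hr
    _ = Δ * μ * (μ * r / s) := by ring
    _ ≤ Δ * μ * 1 := by gcongr; exact (div_le_one hs).mpr hμr.le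
    _ = μ * Δ := by ring

/-- Lipschitz-type stability of the trust-region solution in `λ`. -/
theorem stmt11 {d : ℕ} (H M Mdag Hdag : Matrix (Fin d) (Fin d) ℝ)
    (hH : H.PosSemidef) (hM : M.PosSemidef)
    (hker : ∀ x, M.mulVec x = 0 ↔ H.mulVec x = 0)
    (hMdag : IsMoorePenrose M Mdag) (hHdag : IsMoorePenrose H Hdag)
    (μ : ℝ) (hμ : 0 < μ) (hdom : (H - μ • M).PosSemidef)
    (g : Fin d → ℝ) (hg : g ∈ Set.range M.mulVec)
    (r Δ : ℝ) (hΔ : 0 < Δ)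
    (hfar : r < Real.sqrt (Hdag.mulVec g ⬝ᵥ M.mulVec (Hdag.mulVec g)))
    (lamstar : ℝ) (hlamstar : 0 < lamstar)
    (Pstar : Matrix (Fin d) (Fin d) ℝ) (hPstar : IsMoorePenrose (H + lamstar • M) Pstar)
    (hbd : Real.sqrt (Pstar.mulVec g ⬝ᵥ M.mulVec (Pstar.mulVec g)) = r)
    (lam : ℝ) (hlam : 0 < lam)
    (P : Matrix (Fin d) (Fin d) ℝ) (hP : IsMoorePenrose (H + lam • M) P)
    (hclose : |lam - lamstar| ≤ Δ * μ ^ 2 / Real.sqrt (g ⬝ᵥ Mdag.mulVec g)) :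
    Real.sqrt ((P.mulVec g - Pstar.mulVec g) ⬝ᵥ M.mulVec (P.mulVec g - Pstar.mulVec g))
      ≤ Δ :=
  stmt11_general H M Mdag Hdag hM hMdag hHdag μ hμ hdom g hg r Δ hfar lamstar hlamstar Pstar hPstar
    hbd lam hlam P hP hclose
end

section
/- Uniform-convexity consequence for ℓp regression: for p ≥ 3, any matrix A ∈ ℝ^{n×d}, b ∈ ℝ^n, minimizer x* of f(x) = ‖Ax − b‖_p^p, and any x with f(x) − f(x*) ≤ ε, one has ‖x − x*‖_{AᵀA}^p ≤ 2^{p+1} n^{(p−2)/2} ε. -/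
open Matrix Finset

lemma rpow_superadd {u v p : ℝ} (hu : 0 ≤ u) (hv : 0 ≤ v) (hp : 1 ≤ p) :
    u ^ p + v ^ p ≤ (u + v) ^ p := by
  have := NNReal.add_rpow_le_rpow_add ⟨u, hu⟩ ⟨v, hv⟩ hp
  exact_mod_cast this

lemma rpow_midpt {u v p : ℝ} (hu : 0 ≤ u) (hv : 0 ≤ v) (hp : 1 ≤ p) :
    ((u + v) / 2) ^ p ≤ (u ^ p + v ^ p) / 2 := by
  have h := Real.rpow_arith_mean_le_arith_mean_rpow (univ : Finset (Fin 2))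
    ![1/2, 1/2] ![u, v] (by intro i _; fin_cases i <;> norm_num)
    (by simp [Fin.sum_univ_two]; norm_num)
    (by intro i _; fin_cases i <;> simpa) hp
  simp [Fin.sum_univ_two] at h
  calc ((u + v) / 2) ^ p = (2⁻¹ * u + 2⁻¹ * v) ^ p := by ring_nf
    _ ≤ 2⁻¹ * u ^ p + 2⁻¹ * v ^ p := h
    _ = (u ^ p + v ^ p) / 2 := by ring

lemma sq_rpow_eq_abs_rpow (z p : ℝ) : (z ^ 2) ^ (p / 2) = |z| ^ p := by
  rw [← sq_abs, ← Real.rpow_natCast |z| 2, ← Real.rpow_mul (abs_nonneg z)]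
  congr 1; ring

lemma clarkson {s t p : ℝ} (hp : 2 ≤ p) :
    |(s + t) / 2| ^ p + |(s - t) / 2| ^ p ≤ (|s| ^ p + |t| ^ p) / 2 := by
  have hr : 1 ≤ p / 2 := by linarith
  calc |(s + t) / 2| ^ p + |(s - t) / 2| ^ p
      = (((s + t) / 2) ^ 2) ^ (p/2) + (((s - t) / 2) ^ 2) ^ (p/2) := by
        rw [sq_rpow_eq_abs_rpow, sq_rpow_eq_abs_rpow]
    _ ≤ (((s + t) / 2) ^ 2 + ((s - t) / 2) ^ 2) ^ (p/2) :=
        rpow_superadd (sq_nonneg _) (sq_nonneg _) hr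
    _ = ((s ^ 2 + t ^ 2) / 2) ^ (p/2) := by ring_nf
    _ ≤ ((s ^ 2) ^ (p/2) + (t ^ 2) ^ (p/2)) / 2 :=
        rpow_midpt (sq_nonneg _) (sq_nonneg _) hr
    _ = (|s| ^ p + |t| ^ p) / 2 := by
        rw [sq_rpow_eq_abs_rpow, sq_rpow_eq_abs_rpow]

/-- Distance bound for approximate minimizers of the `ℓ_p` regression objective. -/
theorem stmt14 {n d : ℕ} (A : Matrix (Fin n) (Fin d) ℝ) (b : Fin n → ℝ)
    (p : ℝ) (hp : 3 ≤ p) (xstar : Fin d → ℝ)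
    (hmin : ∀ x : Fin d → ℝ,
      ∑ i, |(A.mulVec xstar - b) i| ^ p ≤ ∑ i, |(A.mulVec x - b) i| ^ p)
    (x : Fin d → ℝ) (ε : ℝ)
    (hx : ∑ i, |(A.mulVec x - b) i| ^ p - ∑ i, |(A.mulVec xstar - b) i| ^ p ≤ ε) :
    Real.sqrt (A.mulVec (x - xstar) ⬝ᵥ A.mulVec (x - xstar)) ^ p
      ≤ 2 ^ (p + 1) * (n : ℝ) ^ ((p - 2) / 2) * ε := by
  set u : Fin n → ℝ := A.mulVec x - b with hu
  set w : Fin n → ℝ := A.mulVec xstar - b with hw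
  have hε : 0 ≤ ε := le_trans (by have := hmin x; linarith) hx
  have hmid : ∑ i, |w i| ^ p ≤ ∑ i, |(u i + w i) / 2| ^ p := by
    have h := hmin ((2⁻¹ : ℝ) • (x + xstar))
    have hz : ∀ i, (A.mulVec ((2⁻¹ : ℝ) • (x + xstar)) - b) i = (u i + w i) / 2 := by
      intro i
      simp [hu, hw, Matrix.mulVec_smul, Matrix.mulVec_add, Pi.smul_apply, Pi.sub_apply,
        Pi.add_apply]
      ring
    calc ∑ i, |w i| ^ p
        ≤ ∑ i, |(A.mulVec ((2⁻¹ : ℝ) • (x + xstar)) - b) i| ^ p := h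
      _ = ∑ i, |(u i + w i) / 2| ^ p :=
          Finset.sum_congr rfl fun i _ => by rw [hz i]
  have hcl : ∑ i, |(u i + w i) / 2| ^ p + ∑ i, |(u i - w i) / 2| ^ p
      ≤ (∑ i, |u i| ^ p + ∑ i, |w i| ^ p) / 2 := by
    rw [← Finset.sum_add_distrib, ← Finset.sum_add_distrib, Finset.sum_div]
    exact Finset.sum_le_sum fun i _ => clarkson (by linarith)
  have hD : ∑ i, |(u i - w i) / 2| ^ p ≤ ε / 2 := by linarith
  have hΔ : ∑ i, |u i - w i| ^ p ≤ 2 ^ (p - 1) * ε := by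
    have h2 : ∀ i : Fin n, |u i - w i| ^ p = 2 ^ p * |(u i - w i) / 2| ^ p := by
      intro i
      rw [← Real.mul_rpow (by norm_num) (abs_nonneg _)]
      congr 1
      rw [abs_div]
      norm_num
      ring
    calc ∑ i, |u i - w i| ^ p = 2 ^ p * ∑ i, |(u i - w i) / 2| ^ p := by
          rw [Finset.mul_sum]; exact Finset.sum_congr rfl fun i _ => h2 i
      _ ≤ 2 ^ p * (ε / 2) :=
          mul_le_mul_of_nonneg_left hD (Real.rpow_nonneg (by norm_num) p)
      _ = 2 ^ (p - 1) * ε := by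
          rw [Real.rpow_sub (by norm_num : (0:ℝ) < 2), Real.rpow_one]; ring
  have hdot : A.mulVec (x - xstar) ⬝ᵥ A.mulVec (x - xstar) = ∑ i, (u i - w i) ^ 2 := by
    have hAv : ∀ i, A.mulVec (x - xstar) i = u i - w i := by
      intro i
      simp [hu, hw, Matrix.mulVec_sub, Pi.sub_apply]
    simp only [dotProduct]
    exact Finset.sum_congr rfl fun i _ => by rw [hAv i]; ring
  have hTnn : (0:ℝ) ≤ ∑ i, (u i - w i) ^ 2 := Finset.sum_nonneg fun i _ => sq_nonneg _
  have hsqrt : Real.sqrt (A.mulVec (x - xstar) ⬝ᵥ A.mulVec (x - xstar)) ^ p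
      = (∑ i, (u i - w i) ^ 2) ^ (p / 2) := by
    rw [hdot, Real.sqrt_eq_rpow, ← Real.rpow_mul hTnn]
    congr 1
    ring
  rw [hsqrt]
  -- norm comparison: (∑ Δ²)^(p/2) ≤ n^((p-2)/2) * ∑ |Δ|^p
  have hnn : (0:ℝ) ≤ (n : ℝ) ^ ((p - 2) / 2) := Real.rpow_nonneg (Nat.cast_nonneg n) _
  have hcmp : (∑ i, (u i - w i) ^ 2) ^ (p / 2)
      ≤ (n : ℝ) ^ ((p - 2) / 2) * ∑ i, |u i - w i| ^ p := by
    rcases Nat.eq_zero_or_pos n with hn | hn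
    · subst hn
      simp [Real.zero_rpow (by positivity : p / 2 ≠ 0)]
    · have hnpos : (0:ℝ) < (n : ℝ) := by exact_mod_cast hn
      have hr : 1 ≤ p / 2 := by linarith
      have h := Real.rpow_arith_mean_le_arith_mean_rpow (Finset.univ : Finset (Fin n))
        (fun _ => 1 / (n : ℝ)) (fun i => (u i - w i) ^ 2)
        (fun i _ => by positivity)
        (by simp [Finset.sum_const]; field_simp)
        (fun i _ => sq_nonneg _) hr
      have hL : (∑ i, (1 / (n : ℝ)) * (u i - w i) ^ 2) ^ (p / 2)
          = (1 / (n : ℝ)) ^ (p / 2) * (∑ i, (u i - w i) ^ 2) ^ (p / 2) := by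
        rw [← Finset.mul_sum, Real.mul_rpow (by positivity) hTnn]
      have hR : ∑ i, (1 / (n : ℝ)) * ((u i - w i) ^ 2) ^ (p / 2)
          = (1 / (n : ℝ)) * ∑ i, |u i - w i| ^ p := by
        rw [Finset.mul_sum]
        exact Finset.sum_congr rfl fun i _ => by rw [sq_rpow_eq_abs_rpow]
      rw [hL, hR] at h
      have key : (∑ i, (u i - w i) ^ 2) ^ (p / 2)
          ≤ (n : ℝ) ^ (p / 2) * ((1 / (n : ℝ)) * ∑ i, |u i - w i| ^ p) := by
        have h2 := mul_le_mul_of_nonneg_left h (le_of_lt (Real.rpow_pos_of_pos hnpos (p / 2)))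
        calc (∑ i, (u i - w i) ^ 2) ^ (p / 2)
            = (n : ℝ) ^ (p / 2) * ((1 / (n : ℝ)) ^ (p / 2)
                * (∑ i, (u i - w i) ^ 2) ^ (p / 2)) := by
              rw [← mul_assoc, ← Real.mul_rpow (le_of_lt hnpos) (by positivity)]
              rw [mul_one_div_cancel (ne_of_gt hnpos), Real.one_rpow, one_mul]
          _ ≤ (n : ℝ) ^ (p / 2) * ((1 / (n : ℝ)) * ∑ i, |u i - w i| ^ p) := h2
      calc (∑ i, (u i - w i) ^ 2) ^ (p / 2)
          ≤ (n : ℝ) ^ (p / 2) * ((1 / (n : ℝ)) * ∑ i, |u i - w i| ^ p) := key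
        _ = (n : ℝ) ^ (p / 2) * (n : ℝ)⁻¹ * ∑ i, |u i - w i| ^ p := by ring
        _ = (n : ℝ) ^ ((p - 2) / 2) * ∑ i, |u i - w i| ^ p := by
            congr 1
            rw [← Real.rpow_neg_one (n : ℝ), ← Real.rpow_add hnpos]
            congr 1
            ring
  calc (∑ i, (u i - w i) ^ 2) ^ (p / 2)
      ≤ (n : ℝ) ^ ((p - 2) / 2) * ∑ i, |u i - w i| ^ p := hcmp
    _ ≤ (n : ℝ) ^ ((p - 2) / 2) * (2 ^ (p - 1) * ε) := mul_le_mul_of_nonneg_left hΔ hnn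
    _ ≤ 2 ^ (p + 1) * (n : ℝ) ^ ((p - 2) / 2) * ε := by
        have h21 : (2:ℝ) ^ (p - 1) ≤ 2 ^ (p + 1) :=
          Real.rpow_le_rpow_of_exponent_le (by norm_num) (by linarith)
        calc (n : ℝ) ^ ((p - 2) / 2) * (2 ^ (p - 1) * ε)
            = 2 ^ (p - 1) * (n : ℝ) ^ ((p - 2) / 2) * ε := by ring
          _ ≤ 2 ^ (p + 1) * (n : ℝ) ^ ((p - 2) / 2) * ε := by
              apply mul_le_mul_of_nonneg_right _ hε
              exact mul_le_mul_of_nonneg_right h21 hnn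
end

section
/- Nemirovski's function is an r-robust zero-chain: for r > 0, N ∈ ℕ, define f(x) = max_{i∈[N]} {x_i − 4r·i}. Then for every x̄ ∈ ℝ^d and every x with ‖x − x̄‖₂ ≤ r, f(x) = f(x_1, …, x_{i⁺_r(x̄)}, 0, …, 0), where i⁺_r(x̄) = min{i ∈ [d] : |x̄_j| ≤ r for all j ≥ i} (and i⁺_r(x̄) = d+1 if |x̄_d| > r). -/
/-- The (1-indexed) progress index: the smallest `i ≥ 1` such that every coordinate of
`xbar` with (1-indexed) index at least `i` has magnitude at most `r`. -/
noncomputable def iplus (d : ℕ) (r : ℝ) (xbar : Fin d → ℝ) : ℕ :=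
  sInf {i : ℕ | 1 ≤ i ∧ ∀ j : Fin d, i ≤ (j : ℕ) + 1 → |xbar j| ≤ r}

/-- Nemirovski's function `max_{i ∈ [N]} (x_i − 4 r i)` (1-indexed). -/
noncomputable def nemF (d N : ℕ) (hN : 0 < N) (hNd : N ≤ d) (r : ℝ) (x : Fin d → ℝ) : ℝ :=
  Finset.univ.sup' (Finset.univ_nonempty_iff.mpr ⟨⟨0, hN⟩⟩)
    (fun i : Fin N => x (Fin.castLE hNd i) - 4 * r * ((i : ℕ) + 1))

/-- Nemirovski's function is an `r`-robust zero-chain: on any radius-`r` Euclidean ball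
around `xbar` it only depends on the first `i⁺_r(xbar)` coordinates. -/
theorem stmt17 {d N : ℕ} (hN : 0 < N) (hNd : N ≤ d) (r : ℝ) (hr : 0 < r)
    (xbar x : Fin d → ℝ)
    (hball : Real.sqrt (∑ i, (x i - xbar i) ^ 2) ≤ r) :
    nemF d N hN hNd r x =
      nemF d N hN hNd r (fun j => if (j : ℕ) + 1 ≤ iplus d r xbar then x j else 0) := by
  classical
  set k := iplus d r xbar with hkdef
  have hmem : k ∈ {i : ℕ | 1 ≤ i ∧ ∀ j : Fin d, i ≤ (j : ℕ) + 1 → |xbar j| ≤ r} := by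
    rw [hkdef, iplus]
    apply Nat.sInf_mem
    refine ⟨d + 1, by omega, fun j hj => ?_⟩
    exact absurd hj (by omega)
  obtain ⟨hk1, hksmall⟩ := hmem
  -- coordinatewise ball bound
  have hcoord : ∀ j : Fin d, |x j - xbar j| ≤ r := by
    intro j
    have hsumnn : (0:ℝ) ≤ ∑ i, (x i - xbar i) ^ 2 :=
      Finset.sum_nonneg fun i _ => sq_nonneg _
    have hsum : ∑ i, (x i - xbar i) ^ 2 ≤ r ^ 2 := by
      nlinarith [Real.sq_sqrt hsumnn, Real.sqrt_nonneg (∑ i, (x i - xbar i) ^ 2)]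
    have h1 : (x j - xbar j) ^ 2 ≤ r ^ 2 :=
      le_trans (Finset.single_le_sum (f := fun i => (x i - xbar i) ^ 2)
        (fun i _ => sq_nonneg _) (Finset.mem_univ j)) hsum
    have := Real.sqrt_le_sqrt h1
    rwa [Real.sqrt_sq_eq_abs, Real.sqrt_sq hr.le] at this
  have hbig : ∀ j : Fin d, k ≤ (j : ℕ) + 1 → |x j| ≤ 2 * r := by
    intro j hj
    have h1 := hksmall j hj
    have h2 := hcoord j
    have := abs_sub_abs_le_abs_sub (x j) (xbar j)
    calc |x j| ≤ |x j - xbar j| + |xbar j| := by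
          have := abs_sub (x j) (xbar j); nlinarith [abs_sub_abs_le_abs_sub (x j) (xbar j)]
      _ ≤ 2 * r := by linarith
  rw [nemF, nemF]
  apply le_antisymm
  · apply Finset.sup'_le
    intro i _
    by_cases hik : (i : ℕ) + 1 ≤ k
    · refine Finset.le_sup'_of_le _ (Finset.mem_univ i) ?_
      simp [Fin.coe_castLE, hik]
    · have hkN : k - 1 < N := by omega
      set i0 : Fin N := ⟨k - 1, hkN⟩ with hi0
      refine Finset.le_sup'_of_le _ (Finset.mem_univ i0) ?_
      have hc0 : ((i0 : ℕ) : ℕ) + 1 = k := by simp [hi0]; omega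
      have hcond : (i0 : ℕ) + 1 ≤ k := by omega
      simp only [Fin.coe_castLE, if_pos hcond]
      have h1 : |x (Fin.castLE hNd i)| ≤ 2 * r := hbig _ (by simp; omega)
      have hval : ((Fin.castLE hNd i0 : Fin d) : ℕ) = k - 1 := rfl
      have h2 : |x (Fin.castLE hNd i0)| ≤ 2 * r := hbig _ (by rw [hval]; omega)
      have hx1 : x (Fin.castLE hNd i) ≤ 2 * r := (abs_le.mp h1).2
      have hx2 : -(2 * r) ≤ x (Fin.castLE hNd i0) := (abs_le.mp h2).1
      have hkr : ((k : ℕ) : ℝ) + 1 ≤ ((i : ℕ) : ℝ) + 1 := by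
        have : k + 1 ≤ (i : ℕ) + 1 := by omega
        exact_mod_cast this
      have hi0r : ((i0 : ℕ) : ℝ) + 1 = (k : ℝ) := by
        have hv0 : (i0 : ℕ) = k - 1 := rfl
        have : (i0 : ℕ) + 1 = k := by omega
        exact_mod_cast this
      rw [hi0r]
      nlinarith
  · apply Finset.sup'_le
    intro i _
    by_cases hik : (i : ℕ) + 1 ≤ k
    · refine Finset.le_sup'_of_le _ (Finset.mem_univ i) ?_
      simp [Fin.coe_castLE, hik]
    · have hkN : k - 1 < N := by omega
      set i0 : Fin N := ⟨k - 1, hkN⟩ with hi0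
      refine Finset.le_sup'_of_le _ (Finset.mem_univ i0) ?_
      simp only [Fin.coe_castLE, if_neg hik]
      have hval : ((Fin.castLE hNd i0 : Fin d) : ℕ) = k - 1 := rfl
      have h2 : |x (Fin.castLE hNd i0)| ≤ 2 * r := hbig _ (by rw [hval]; omega)
      have hx2 : -(2 * r) ≤ x (Fin.castLE hNd i0) := (abs_le.mp h2).1
      have hkr : ((k : ℕ) : ℝ) + 1 ≤ ((i : ℕ) : ℝ) + 1 := by
        have : k + 1 ≤ (i : ℕ) + 1 := by omega
        exact_mod_cast this
      have hi0r : ((i0 : ℕ) : ℝ) + 1 = (k : ℝ) := by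
        have hv0 : (i0 : ℕ) = k - 1 := rfl
        have : (i0 : ℕ) + 1 = k := by omega
        exact_mod_cast this
      rw [hi0r]
      nlinarith
end

section
/- Contraction of ball-optimization iterates: let f : ℝ^d → ℝ be strictly convex with minimizer x*, and for x ∈ ℝ^d let O(x) be the minimizer of f over the Euclidean ball of radius r around x. If O(x) ≠ x*, then ‖O(x) − x*‖₂ ≤ √(‖x − x*‖₂² − r²); in particular ‖O(x) − x*‖₂ ≤ ‖x − x*‖₂ always. -/
/-!
Along the segment from the ball minimizer `z` to the global minimizer `x*`, strict convexity
makes `f` strictly smaller than `f z`, so the open segment avoids the ball. Expanding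
`‖z + t • (x* - z) - x‖²` as a quadratic in `t` and letting `t → 0⁺` shows that `z` lies on
the sphere and that `⟪z - x, x* - z⟫ ≥ 0`; the law of cosines then gives
`‖x - x*‖² ≥ r² + ‖z - x*‖²`.
-/

open Set Filter Topology
open scoped RealInnerProductSpace

theorem StrictConvexOn.disjoint_openSegment_of_isMinOn {𝕜 E β : Type*} [Semiring 𝕜]
    [PartialOrder 𝕜] [AddCommMonoid E] [AddCommMonoid β] [LinearOrder β] [SMul 𝕜 E]
    [Module 𝕜 β] [PosSMulStrictMono 𝕜 β] [IsOrderedAddMonoid β] {C s : Set E} {f : E → β}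
    {y z : E}
    (hf : StrictConvexOn 𝕜 C f) (hz : z ∈ C) (hy : y ∈ C) (hzy : z ≠ y) (hfy : f y ≤ f z)
    (hmin : IsMinOn f s z) : Disjoint (openSegment 𝕜 z y) s := by
  refine disjoint_left.2 fun w hw hws => ?_
  have hlt : f w < f z := max_eq_left hfy ▸ hf.lt_on_openSegment hz hy hzy hw
  exact (isMinOn_iff.1 hmin w hws).not_gt hlt

theorem eq_zero_and_nonneg_of_forall_Ioo_pos {a b q : ℝ} (ha : a ≤ 0)
    (h : ∀ t ∈ Ioo (0 : ℝ) 1, 0 < a + b * t + q * t ^ 2) : a = 0 ∧ 0 ≤ b := by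
  have hIoo : ∀ᶠ t in 𝓝[>] (0 : ℝ), t ∈ Ioo (0 : ℝ) 1 := Ioo_mem_nhdsGT one_pos
  have hlim (c₀ c₁ c₂ : ℝ) :
      Tendsto (fun t : ℝ => c₀ + c₁ * t + c₂ * t ^ 2) (𝓝[>] 0) (𝓝 c₀) :=
    tendsto_nhdsWithin_of_tendsto_nhds <| Continuous.tendsto' (by fun_prop) 0 c₀ (by simp)
  have ha0 : a = 0 :=
    le_antisymm ha <| ge_of_tendsto (hlim a b q) (hIoo.mono fun t ht => (h t ht).le)
  subst ha0
  refine ⟨rfl, ge_of_tendsto (hlim b q 0) (hIoo.mono fun t ht => ?_)⟩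
  have hpos : 0 < t * (b + q * t) := by linarith [h t ht]
  linarith [pos_of_mul_pos_right hpos ht.1.le]

section InnerProductSpace

variable {F : Type*} [NormedAddCommGroup F] [InnerProductSpace ℝ F]

theorem norm_sub_eq_and_inner_nonneg_of_disjoint_openSegment {x y z : F} {r : ℝ}
    (hz : z ∈ Metric.closedBall x r)
    (hdisj : Disjoint (openSegment ℝ z y) (Metric.closedBall x r)) :
    ‖z - x‖ = r ∧ 0 ≤ ⟪z - x, y - z⟫ := by
  rw [Metric.mem_closedBall, dist_eq_norm] at hz
  have hexpand : ∀ t : ℝ, ‖z + t • (y - z) - x‖ ^ 2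
      = ‖z - x‖ ^ 2 + 2 * ⟪z - x, y - z⟫ * t + ‖y - z‖ ^ 2 * t ^ 2 := fun t => by
    rw [show z + t • (y - z) - x = (z - x) + t • (y - z) by abel, norm_add_sq_real,
      real_inner_smul_right, norm_smul, mul_pow, Real.norm_eq_abs, sq_abs]
    ring
  have hout : ∀ t ∈ Ioo (0 : ℝ) 1,
      0 < (‖z - x‖ ^ 2 - r ^ 2) + 2 * ⟪z - x, y - z⟫ * t + ‖y - z‖ ^ 2 * t ^ 2 := by
    intro t ht
    have hmem : z + t • (y - z) ∈ openSegment ℝ z y :=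
      (openSegment_eq_image' ℝ z y).symm ▸ mem_image_of_mem _ ht
    have hfar : r < ‖z + t • (y - z) - x‖ := by
      simpa [dist_eq_norm] using disjoint_left.1 hdisj hmem
    have := pow_lt_pow_left₀ hfar ((norm_nonneg _).trans hz) two_ne_zero
    linarith [hexpand t]
  obtain ⟨hsphere, hinner⟩ := eq_zero_and_nonneg_of_forall_Ioo_pos
    (by nlinarith [norm_nonneg (z - x)]) hout
  refine ⟨?_, by linarith⟩
  nlinarith [norm_nonneg (z - x)]

theorem norm_sub_sq_add_sq_le_of_inner_nonneg {x y z : F} {r : ℝ} (hzx : ‖z - x‖ = r)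
    (hinner : 0 ≤ ⟪z - x, y - z⟫) : ‖z - y‖ ^ 2 + r ^ 2 ≤ ‖x - y‖ ^ 2 := by
  rw [show x - y = -((z - x) + (y - z)) by abel, norm_neg, norm_add_sq_real, hzx,
    norm_sub_rev z y]
  linarith

end InnerProductSpace

theorem stmt19_general {d : ℕ} (f : EuclideanSpace ℝ (Fin d) → ℝ)
    (hconv : StrictConvexOn ℝ Set.univ f)
    (xstar : EuclideanSpace ℝ (Fin d)) (hmin : ∀ z, f xstar ≤ f z)
    (r : ℝ) (x z : EuclideanSpace ℝ (Fin d))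
    (hz : z ∈ Metric.closedBall x r) (hzmin : ∀ w ∈ Metric.closedBall x r, f z ≤ f w) :
    (z ≠ xstar → ‖z - xstar‖ ≤ Real.sqrt (‖x - xstar‖ ^ 2 - r ^ 2)) ∧
      ‖z - xstar‖ ≤ ‖x - xstar‖ := by
  by_cases hzx : z = xstar
  · subst hzx
    simp
  have hdisj := hconv.disjoint_openSegment_of_isMinOn (mem_univ z) (mem_univ xstar) hzx
    (hmin z) (isMinOn_iff.2 hzmin)
  obtain ⟨hsphere, hinner⟩ := norm_sub_eq_and_inner_nonneg_of_disjoint_openSegment hz hdisj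
  have hbound := norm_sub_sq_add_sq_le_of_inner_nonneg hsphere hinner
  refine ⟨fun _ => Real.le_sqrt_of_sq_le (by linarith), ?_⟩
  exact le_of_sq_le_sq (by nlinarith) (norm_nonneg _)

/-- Contraction of ball-optimization iterates for a strictly convex function. -/
theorem stmt19 {d : ℕ} (f : EuclideanSpace ℝ (Fin d) → ℝ)
    (hconv : StrictConvexOn ℝ Set.univ f) (hcont : Continuous f)
    (xstar : EuclideanSpace ℝ (Fin d)) (hmin : ∀ z, f xstar ≤ f z)
    (r : ℝ) (hr : 0 < r) (x z : EuclideanSpace ℝ (Fin d))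
    (hz : z ∈ Metric.closedBall x r) (hzmin : ∀ w ∈ Metric.closedBall x r, f z ≤ f w) :
    (z ≠ xstar → ‖z - xstar‖ ≤ Real.sqrt (‖x - xstar‖ ^ 2 - r ^ 2)) ∧
      ‖z - xstar‖ ≤ ‖x - xstar‖ :=
  stmt19_general f hconv xstar hmin r x z hz hzmin
end
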